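/- arXiv:1803.08254 — 5 statements merged into one kernel-verified Lean document; each statement's English description precedes it below -/
import Mathlib

section
/- For every n ∈ ℤ, the complex-valued function u(x,t) = exp(inπκ·log(t+x)) − exp(inπκ·log((1+ℓ₂)/(1−ℓ₂)))·exp(inπκ·log(t−x)), defined for t > 0 and −ℓ₁t ≤ x ≤ ℓ₂t, satisfies the one-dimensional wave equation ∂²u/∂t² − ∂²u/∂x² = 0 at every interior point, and satisfies the moving boundary conditions u(−ℓ₁t, t) = 0 and u(ℓ₂t, t) = 0 for every t > 0. -/
/-!
Writing `F r = exp (a log r)` with `a = inπκ` and `C = F ((1 + ℓ₂) / (1 - ℓ₂))`, the function is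
`u x t = F (t + x) - C F (t - x)`, a sum of two travelling waves, so d'Alembert's computation gives
`u_tt = u_xx`. Since `F (r s) = F r F s` for `r, s ≠ 0`, the boundary condition at `x = ℓ₂ t` is
this multiplicativity, while the one at `x = -ℓ₁ t` reduces to `F (α β) = 1`, i.e.
`exp (iπnκ log (α β)) = exp (2πin) = 1`.
-/

open Filter Topology Complex

lemma ContDiffAt.eventually_differentiableAt {𝕜 E F : Type*} [NontriviallyNormedField 𝕜]
    [NormedAddCommGroup E] [NormedSpace 𝕜 E] [NormedAddCommGroup F] [NormedSpace 𝕜 F]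
    {f : E → F} {x : E} (hf : ContDiffAt 𝕜 1 f x) : ∀ᶠ y in 𝓝 x, DifferentiableAt 𝕜 f y :=
  (hf.eventually (by simp)).mono fun _ hy => hy.differentiableAt one_ne_zero

section dAlembert

variable {E : Type*} [NormedAddCommGroup E] [NormedSpace ℝ E] {f g : ℝ → E} {x t : ℝ}

lemma deriv_deriv_dAlembert_time (hf : ContDiffAt ℝ 2 f (t + x)) (hg : ContDiffAt ℝ 2 g (t - x)) :
    deriv (fun s => deriv (fun s' => f (s' + x) + g (s' - x)) s) t =
      deriv (deriv f) (t + x) + deriv (deriv g) (t - x) := by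
  have hf₁ : ∀ᶠ s in 𝓝 t, DifferentiableAt ℝ f (s + x) :=
    ((continuous_add_const x).tendsto t).eventually
      (hf.of_le one_le_two).eventually_differentiableAt
  have hg₁ : ∀ᶠ s in 𝓝 t, DifferentiableAt ℝ g (s - x) :=
    ((continuous_sub_right x).tendsto t).eventually
      (hg.of_le one_le_two).eventually_differentiableAt
  have hfirst : (fun s => deriv (fun s' => f (s' + x) + g (s' - x)) s) =ᶠ[𝓝 t]
      fun s => deriv f (s + x) + deriv g (s - x) := by
    filter_upwards [hf₁, hg₁] with s hfs hgs
    rw [deriv_fun_add (differentiableAt_comp_add_const.2 hfs)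
      (differentiableAt_comp_sub_const.2 hgs),
      deriv_comp_add_const, deriv_comp_sub_const]
  have hf₂ : DifferentiableAt ℝ (deriv f) (t + x) :=
    (hf.derivWithin (m := 1) (by norm_num)).differentiableAt one_ne_zero
  have hg₂ : DifferentiableAt ℝ (deriv g) (t - x) :=
    (hg.derivWithin (m := 1) (by norm_num)).differentiableAt one_ne_zero
  rw [hfirst.deriv_eq, deriv_fun_add (differentiableAt_comp_add_const.2 hf₂)
    (differentiableAt_comp_sub_const.2 hg₂), deriv_comp_add_const, deriv_comp_sub_const]

lemma deriv_deriv_dAlembert_space (hf : ContDiffAt ℝ 2 f (t + x)) (hg : ContDiffAt ℝ 2 g (t - x)) :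
    deriv (fun y => deriv (fun y' => f (t + y') + g (t - y')) y) x =
      deriv (deriv f) (t + x) + deriv (deriv g) (t - x) := by
  have hf₁ : ∀ᶠ y in 𝓝 x, DifferentiableAt ℝ f (t + y) :=
    ((continuous_const_add t).tendsto x).eventually
      (hf.of_le one_le_two).eventually_differentiableAt
  have hg₁ : ∀ᶠ y in 𝓝 x, DifferentiableAt ℝ g (t - y) :=
    ((continuous_sub_left t).tendsto x).eventually
      (hg.of_le one_le_two).eventually_differentiableAt
  have hfirst : (fun y => deriv (fun y' => f (t + y') + g (t - y')) y) =ᶠ[𝓝 x]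
      fun y => deriv f (t + y) - deriv g (t - y) := by
    filter_upwards [hf₁, hg₁] with y hfy hgy
    rw [deriv_fun_add ((differentiableAt_comp_add_left t).2 hfy)
      (differentiableAt_comp_const_sub.2 hgy),
      deriv_comp_const_add, deriv_comp_const_sub, ← sub_eq_add_neg]
  have hf₂ : DifferentiableAt ℝ (deriv f) (t + x) :=
    (hf.derivWithin (m := 1) (by norm_num)).differentiableAt one_ne_zero
  have hg₂ : DifferentiableAt ℝ (deriv g) (t - x) :=
    (hg.derivWithin (m := 1) (by norm_num)).differentiableAt one_ne_zero
  rw [hfirst.deriv_eq, deriv_fun_sub ((differentiableAt_comp_add_left t).2 hf₂)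
    (differentiableAt_comp_const_sub.2 hg₂), deriv_comp_const_add, deriv_comp_const_sub,
    sub_neg_eq_add]

end dAlembert

lemma contDiffAt_cexp_mul_log (a : ℂ) {n : WithTop ℕ∞} {r : ℝ} (hr : r ≠ 0) :
    ContDiffAt ℝ n (fun s : ℝ => cexp (a * Real.log s)) r := by
  have hlog : ContDiffAt ℝ n (fun s : ℝ => (Real.log s : ℂ)) r :=
    ofRealCLM.contDiff.contDiffAt.comp r (Real.contDiffAt_log.2 hr)
  exact (contDiffAt_const.mul hlog).cexp

lemma cexp_mul_log_mul (a : ℂ) {r s : ℝ} (hr : r ≠ 0) (hs : s ≠ 0) :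
    cexp (a * Real.log (r * s)) = cexp (a * Real.log r) * cexp (a * Real.log s) := by
  rw [Real.log_mul hr hs, ofReal_add, mul_add, exp_add]

/-- For `L = 0` this holds because `2 / 0 = 0`. -/
lemma cexp_int_mul_pi_mul_two_div_mul (n : ℤ) (L : ℝ) :
    cexp (I * n * Real.pi * (2 / L : ℝ) * L) = 1 := by
  rcases eq_or_ne L 0 with rfl | hL
  · simp
  · have hL' : (L : ℂ) ≠ 0 := ofReal_ne_zero.2 hL
    rw [← exp_int_mul_two_pi_mul_I n]
    congr 1
    push_cast
    field_simp

theorem wave_series_term_solves_wave_equation_general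
    (ℓ₁ ℓ₂ α β κ : ℝ)
    (hℓ₁ : 0 ≤ ℓ₁) (hℓ₁' : ℓ₁ < 1) (hℓ₂ : 0 ≤ ℓ₂) (hℓ₂' : ℓ₂ < 1)
    (hα : α = (1 + ℓ₁) / (1 - ℓ₂)) (hβ : β = (1 + ℓ₂) / (1 - ℓ₁))
    (hκ : κ = 2 / Real.log (α * β))
    (n : ℤ) (u : ℝ → ℝ → ℂ)
    (hu : ∀ x t : ℝ, u x t =
      Complex.exp (Complex.I * n * Real.pi * κ * Real.log (t + x)) -
      Complex.exp (Complex.I * n * Real.pi * κ * Real.log ((1 + ℓ₂) / (1 - ℓ₂))) *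
        Complex.exp (Complex.I * n * Real.pi * κ * Real.log (t - x))) :
    (∀ t : ℝ, 0 < t → ∀ x : ℝ, -ℓ₁ * t < x → x < ℓ₂ * t →
      deriv (fun s : ℝ => deriv (fun s' : ℝ => u x s') s) t -
        deriv (fun y : ℝ => deriv (fun y' : ℝ => u y' t) y) x = 0) ∧
    (∀ t : ℝ, 0 < t → u (-ℓ₁ * t) t = 0 ∧ u (ℓ₂ * t) t = 0) := by
  set a : ℂ := I * n * Real.pi * κ with ha
  set F : ℝ → ℂ := fun r => cexp (a * Real.log r)
  set G : ℝ → ℂ := fun r => -(F ((1 + ℓ₂) / (1 - ℓ₂)) * F r)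
  have hu' : ∀ x t, u x t = F (t + x) + G (t - x) := fun x t => by
    rw [hu, sub_eq_add_neg]
  have h₁ : 0 < 1 - ℓ₁ := by linarith
  have h₂ : 0 < 1 - ℓ₂ := by linarith
  have hratio : (1 + ℓ₂) / (1 - ℓ₂) ≠ 0 := by positivity
  refine ⟨fun t ht x hx₁ hx₂ => ?_, fun t ht => ⟨?_, ?_⟩⟩
  · have hF : ContDiffAt ℝ 2 F (t + x) := contDiffAt_cexp_mul_log a (by nlinarith)
    have hG : ContDiffAt ℝ 2 G (t - x) :=
      (contDiffAt_const.mul (contDiffAt_cexp_mul_log a (by nlinarith))).neg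
    simp only [hu']
    rw [deriv_deriv_dAlembert_time hF hG, deriv_deriv_dAlembert_space hF hG, sub_self]
  · have hαβ : α * β ≠ 0 := by
      rw [hα, hβ]
      positivity
    have hFαβ : cexp (a * Real.log (α * β)) = 1 := by
      rw [ha, hκ]
      exact cexp_int_mul_pi_mul_two_div_mul n _
    have hscale : (1 + ℓ₂) / (1 - ℓ₂) * (t - -ℓ₁ * t) = α * β * (t + -ℓ₁ * t) := by
      rw [hα, hβ]
      field_simp
      ring
    rw [hu', add_neg_eq_zero, ← cexp_mul_log_mul a hratio (by nlinarith), hscale,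
      cexp_mul_log_mul a hαβ (by nlinarith), hFαβ, one_mul]
  · have hscale : (1 + ℓ₂) / (1 - ℓ₂) * (t - ℓ₂ * t) = t + ℓ₂ * t := by
      field_simp
    rw [hu', add_neg_eq_zero, ← cexp_mul_log_mul a hratio (by nlinarith), hscale]

/-- For every `n ∈ ℤ`, the function
`u(x,t) = exp(inπκ·log(t+x)) − exp(inπκ·log((1+ℓ₂)/(1−ℓ₂)))·exp(inπκ·log(t−x))`
satisfies the 1-d wave equation `u_tt − u_xx = 0` at every interior point of the
noncylindrical domain, and the moving boundary conditions
`u(−ℓ₁t, t) = 0`, `u(ℓ₂t, t) = 0` for every `t > 0`. -/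
theorem wave_series_term_solves_wave_equation
    (ℓ₁ ℓ₂ α β κ : ℝ)
    (hℓ₁ : 0 ≤ ℓ₁) (hℓ₁' : ℓ₁ < 1) (hℓ₂ : 0 ≤ ℓ₂) (hℓ₂' : ℓ₂ < 1)
    (hℓ : 0 < ℓ₁ + ℓ₂)
    (hα : α = (1 + ℓ₁) / (1 - ℓ₂)) (hβ : β = (1 + ℓ₂) / (1 - ℓ₁))
    (hκ : κ = 2 / Real.log (α * β))
    (n : ℤ) (u : ℝ → ℝ → ℂ)
    (hu : ∀ x t : ℝ, u x t =
      Complex.exp (Complex.I * n * Real.pi * κ * Real.log (t + x)) -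
      Complex.exp (Complex.I * n * Real.pi * κ * Real.log ((1 + ℓ₂) / (1 - ℓ₂))) *
        Complex.exp (Complex.I * n * Real.pi * κ * Real.log (t - x))) :
    (∀ t : ℝ, 0 < t → ∀ x : ℝ, -ℓ₁ * t < x → x < ℓ₂ * t →
      deriv (fun s : ℝ => deriv (fun s' : ℝ => u x s') s) t -
        deriv (fun y : ℝ => deriv (fun y' : ℝ => u y' t) y) x = 0) ∧
    (∀ t : ℝ, 0 < t → u (-ℓ₁ * t) t = 0 ∧ u (ℓ₂ * t) t = 0) :=
  wave_series_term_solves_wave_equation_general ℓ₁ ℓ₂ α β κ hℓ₁ hℓ₁' hℓ₂ hℓ₂' hα hβ hκ n u hu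
end

section
/- For every t ≥ t₀, the energy satisfies the exact identity t·E(t) + ∫_{−ℓ₁t}^{ℓ₂t} x·φₓ(x,t)·φ_t(x,t) dx = S, where S = 2π²κ·Σ_{n≠0} |n c_n|². -/
/-!
Put `f(s) = ∑ n c_n e^{inπκs}` and `P = log((1+ℓ₂)/(1-ℓ₂))`, so that
`C_n e^{inπκs} = c_n e^{inπκ(s+P)}`. Then `φₓ + φ_t = 2iπκ f(log(t+x))/(t+x)` and `φₓ - φ_t = 2iπκ f(log(t-x)+P)/(t-x)`, and the
integrand `t(φₓ² + φ_t²)/2 + xφₓφ_t = ((t+x)(φₓ+φ_t)² + (t-x)(φₓ-φ_t)²)/4` becomes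
`-π²κ² (f(log(t+x))²/(t+x) + f(log(t-x)+P)²/(t-x))`. The substitutions `s = log(t+x)` and
`s = log(t-x) + P` turn the two terms into integrals of `f²` over adjacent intervals whose union
`[log((1-ℓ₁)t), log((1-ℓ₁)t) + log(αβ)]` is one full period `2/κ` of `f`. Over a period only the
constant Fourier coefficient of `f²` survives, `∑ (n c_n)(-n c_{-n}) = -∑ |n c_n|²`.
-/

open MeasureTheory Set

noncomputable section

open Complex in
def wave (κ : ℝ) (n : ℤ) (s : ℝ) : ℂ := exp (I * n * Real.pi * κ * s)

def waveSum (κ : ℝ) (a : ℤ → ℂ) (s : ℝ) : ℂ := ∑' n : ℤ, a n * wave κ n s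

end

section wave

variable {κ : ℝ} {a : ℤ → ℂ}

lemma norm_wave (n : ℤ) (s : ℝ) : ‖wave κ n s‖ = 1 := by
  rw [wave, Complex.norm_exp]
  simp [Complex.mul_re, Complex.mul_im]

lemma wave_mul_wave (m n : ℤ) (s : ℝ) : wave κ m s * wave κ n s = wave κ (m + n) s := by
  rw [wave, wave, wave, ← Complex.exp_add]
  push_cast
  ring_nf

lemma wave_add (n : ℤ) (s p : ℝ) : wave κ n (s + p) = wave κ n s * wave κ n p := by
  rw [wave, wave, wave, ← Complex.exp_add]
  push_cast
  ring_nf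

lemma wave_zero (s : ℝ) : wave κ 0 s = 1 := by simp [wave]

lemma wave_period {Λ : ℝ} (hΛ : κ * Λ = 2) (n : ℤ) : wave κ n Λ = 1 := by
  have : Complex.I * n * Real.pi * κ * Λ = n * (2 * Real.pi * Complex.I) := by
    rw [← Complex.ofReal_ofNat, ← hΛ]; push_cast; ring
  rw [wave, this, Complex.exp_int_mul_two_pi_mul_I]

@[fun_prop]
lemma continuous_wave (n : ℤ) : Continuous (wave κ n) := by
  unfold wave; fun_prop

lemma integral_wave_period {Λ : ℝ} (hΛ : κ * Λ = 2) (A : ℝ) (n : ℤ) :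
    ∫ s in A..A + Λ, wave κ n s = if n = 0 then (Λ : ℂ) else 0 := by
  split_ifs with hn
  · simp [hn, wave_zero]
  have hκ : κ ≠ 0 := left_ne_zero_of_mul (by rw [hΛ]; norm_num)
  have hc : Complex.I * n * Real.pi * κ ≠ 0 := by
    simp [hn, hκ, Real.pi_ne_zero, Complex.I_ne_zero]
  have := wave_add (κ := κ) n A Λ
  rw [wave_period hΛ, mul_one] at this
  simp only [wave] at this ⊢
  rw [integral_exp_mul_complex hc, this, sub_self, zero_div]

lemma summable_mul_wave (ha : Summable (‖a ·‖)) (s : ℝ) :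
    Summable fun n => a n * wave κ n s :=
  .of_norm <| ha.congr fun n => by rw [norm_mul, norm_wave, mul_one]

lemma continuous_waveSum (ha : Summable (‖a ·‖)) : Continuous (waveSum κ a) :=
  continuous_tsum (fun n => by fun_prop) ha fun n s => by rw [norm_mul, norm_wave, mul_one]

lemma waveSum_add (s p : ℝ) :
    waveSum κ (fun n => a n * wave κ n p) s = waveSum κ a (s + p) := by
  simp only [waveSum, wave_add, mul_comm (wave κ _ s), mul_assoc]

lemma integral_mul_waveSum (ha : Summable (‖a ·‖)) {g : ℝ → ℂ} (hg : Continuous g)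
    (u v : ℝ) :
    ∫ s in u..v, g s * waveSum κ a s = ∑' n, a n * ∫ s in u..v, g s * wave κ n s := by
  have hsum := intervalIntegral.hasSum_integral_of_dominated_convergence
    (μ := volume) (a := u) (b := v)
    (F := fun n s => a n * (g s * wave κ n s)) (f := fun s => g s * waveSum κ a s)
    (fun n s => ‖a n‖ * ‖g s‖) (fun n => by fun_prop) ?_ ?_ ?_ ?_
  · simpa only [intervalIntegral.integral_const_mul] using hsum.tsum_eq.symm
  · exact fun n => .of_forall fun s _ => by
      rw [norm_mul, norm_mul, norm_wave, mul_one]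
  · exact .of_forall fun s _ => ha.mul_right _
  · simp_rw [tsum_mul_right]
    exact (continuous_const.mul hg.norm).intervalIntegrable _ _
  · refine .of_forall fun s _ => ?_
    simp only [waveSum, ← tsum_mul_left]
    exact ((summable_mul_wave ha s).mul_left (g s)).hasSum.congr_fun fun n => by ring

lemma integral_wave_mul_waveSum (ha : Summable (‖a ·‖)) {Λ : ℝ} (hΛ : κ * Λ = 2)
    (A : ℝ) (k : ℤ) : ∫ s in A..A + Λ, wave κ k s * waveSum κ a s = Λ * a (-k) := by
  simp_rw [integral_mul_waveSum ha (continuous_wave k), wave_mul_wave, integral_wave_period hΛ,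
    mul_ite, mul_zero, add_comm k, add_eq_zero_iff_eq_neg]
  rw [tsum_ite_eq, mul_comm]

lemma integral_waveSum_sq (ha : Summable (‖a ·‖)) {Λ : ℝ} (hΛ : κ * Λ = 2) (A : ℝ) :
    ∫ s in A..A + Λ, waveSum κ a s ^ 2 = Λ * ∑' n, a n * a (-n) := by
  simp_rw [sq, integral_mul_waveSum ha (continuous_waveSum ha), mul_comm (waveSum κ a _),
    integral_wave_mul_waveSum ha hΛ, ← tsum_mul_left]
  congr 1 with n
  ring

lemma tsum_intCast_mul_add_div {c C : ℤ → ℂ} (hc : Summable fun n : ℤ => ‖(n : ℂ) * c n‖)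
    (hC : Summable fun n : ℤ => ‖(n : ℂ) * C n‖) (p q : ℝ) (d e : ℂ) :
    ∑' n : ℤ, (n : ℂ) * (c n * wave κ n p / d + C n * wave κ n q / e) =
      waveSum κ (fun n => n * c n) p / d + waveSum κ (fun n => n * C n) q / e := by
  rw [waveSum, waveSum, ← tsum_div_const, ← tsum_div_const,
    ← ((summable_mul_wave hc p).div_const d).tsum_add ((summable_mul_wave hC q).div_const e)]
  congr 1 with n
  ring

lemma tsum_intCast_mul_sub_div {c C : ℤ → ℂ} (hc : Summable fun n : ℤ => ‖(n : ℂ) * c n‖)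
    (hC : Summable fun n : ℤ => ‖(n : ℂ) * C n‖) (p q : ℝ) (d e : ℂ) :
    ∑' n : ℤ, (n : ℂ) * (c n * wave κ n p / d - C n * wave κ n q / e) =
      waveSum κ (fun n => n * c n) p / d - waveSum κ (fun n => n * C n) q / e := by
  rw [waveSum, waveSum, ← tsum_div_const, ← tsum_div_const,
    ← ((summable_mul_wave hc p).div_const d).tsum_sub ((summable_mul_wave hC q).div_const e)]
  congr 1 with n
  ring

end wave

lemma tsum_mul_neg_eq_neg_tsum_norm_sq {a : ℤ → ℂ} (ha : ∀ n, a (-n) = -starRingEnd ℂ (a n)) :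
    ∑' n, a n * a (-n) = -((∑' n, ‖a n‖ ^ 2 : ℝ) : ℂ) := by
  simp_rw [ha, mul_neg, Complex.mul_conj, Complex.normSq_eq_norm_sq, Complex.ofReal_tsum, tsum_neg]

lemma continuousOn_comp_log_add_div {g : ℝ → ℂ} (hg : Continuous g) {t : ℝ} {s : Set ℝ}
    (h : ∀ x ∈ s, 0 < t + x) :
    ContinuousOn (fun x => g (Real.log (t + x)) / ((t + x : ℝ) : ℂ)) s := by
  have hlin : ContinuousOn (fun x => t + x) s := by fun_prop
  refine (hg.comp_continuousOn (hlin.log fun x hx => (h x hx).ne')).div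
    (Complex.continuous_ofReal.comp_continuousOn hlin) fun x hx => ?_
  exact_mod_cast (h x hx).ne'

lemma continuousOn_comp_log_sub_div {g : ℝ → ℂ} (hg : Continuous g) {t : ℝ} {s : Set ℝ}
    (h : ∀ x ∈ s, 0 < t - x) :
    ContinuousOn (fun x => g (Real.log (t - x)) / ((t - x : ℝ) : ℂ)) s := by
  have hlin : ContinuousOn (fun x => t - x) s := by fun_prop
  refine (hg.comp_continuousOn (hlin.log fun x hx => (h x hx).ne')).div
    (Complex.continuous_ofReal.comp_continuousOn hlin) fun x hx => ?_
  exact_mod_cast (h x hx).ne'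

lemma integral_comp_log_add_div {g : ℝ → ℂ} (hg : Continuous g) {t a b : ℝ}
    (h : ∀ x ∈ uIcc a b, 0 < t + x) :
    ∫ x in a..b, g (Real.log (t + x)) / ((t + x : ℝ) : ℂ) =
      ∫ s in Real.log (t + a)..Real.log (t + b), g s := by
  have hderiv : ∀ x ∈ uIcc a b, HasDerivAt (fun y => Real.log (t + y)) (t + x)⁻¹ x := fun x hx =>
    by simpa using ((hasDerivAt_id x).const_add t).log (h x hx).ne'
  have hcont : ContinuousOn (fun x => (t + x)⁻¹) (uIcc a b) :=
    (continuousOn_const.add continuousOn_id).inv₀ fun x hx => (h x hx).ne'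
  rw [← intervalIntegral.integral_deriv_smul_comp hderiv hcont hg]
  congr 1 with x
  simp [div_eq_inv_mul, Complex.real_smul]

lemma integral_comp_log_sub_div {g : ℝ → ℂ} (hg : Continuous g) {t a b : ℝ}
    (h : ∀ x ∈ uIcc a b, 0 < t - x) :
    ∫ x in a..b, g (Real.log (t - x)) / ((t - x : ℝ) : ℂ) =
      ∫ s in Real.log (t - b)..Real.log (t - a), g s := by
  simp_rw [sub_eq_add_neg t]
  rw [intervalIntegral.integral_comp_neg (fun y => g (Real.log (t + y)) / ((t + y : ℝ) : ℂ)),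
    integral_comp_log_add_div hg]
  intro y hy
  simpa [sub_eq_add_neg] using h (-y) (by simpa [uIcc_comm] using Set.neg_mem_neg.mpr hy)

lemma integral_comp_log_add_div_add_comp_log_sub_div {g : ℝ → ℂ} (hg : Continuous g)
    {t a b P Λ : ℝ} (hadd : ∀ x ∈ uIcc a b, 0 < t + x) (hsub : ∀ x ∈ uIcc a b, 0 < t - x)
    (hb : Real.log (t - b) + P = Real.log (t + b))
    (ha : Real.log (t - a) + P = Real.log (t + a) + Λ) :
    ∫ x in a..b, (g (Real.log (t + x)) / ((t + x : ℝ) : ℂ) +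
        g (Real.log (t - x) + P) / ((t - x : ℝ) : ℂ)) =
      ∫ s in Real.log (t + a)..Real.log (t + a) + Λ, g s := by
  have hgP : Continuous fun s => g (s + P) := hg.comp (continuous_add_const P)
  rw [intervalIntegral.integral_add
      (continuousOn_comp_log_add_div hg hadd).intervalIntegrable
      (continuousOn_comp_log_sub_div hgP hsub).intervalIntegrable,
    integral_comp_log_add_div hg hadd, integral_comp_log_sub_div hgP hsub,
    intervalIntegral.integral_comp_add_right g P, hb, ha,
    intervalIntegral.integral_add_adjacent_intervals (hg.intervalIntegrable _ _)
      (hg.intervalIntegrable _ _)]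

lemma ContinuousOn.of_ofReal_eq {u : ℝ → ℝ} {F : ℝ → ℂ} {s : Set ℝ} (hF : ContinuousOn F s)
    (h : ∀ x ∈ s, (u x : ℂ) = F x) : ContinuousOn u s :=
  Complex.isometry_ofReal.isEmbedding.continuousOn_iff.mpr (hF.congr h)

lemma energy_density_eq {κ t x u v : ℝ} {p q : ℂ} (hadd : t + x ≠ 0) (hsub : t - x ≠ 0)
    (hu : (u : ℂ) = Complex.I * Real.pi * κ * (p / ((t + x : ℝ) : ℂ) + q / ((t - x : ℝ) : ℂ)))
    (hv : (v : ℂ) = Complex.I * Real.pi * κ * (p / ((t + x : ℝ) : ℂ) - q / ((t - x : ℝ) : ℂ))) :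
    ((t / 2 * (u ^ 2 + v ^ 2) + x * u * v : ℝ) : ℂ) =
      -(Real.pi * κ) ^ 2 * (p ^ 2 / ((t + x : ℝ) : ℂ) + q ^ 2 / ((t - x : ℝ) : ℂ)) := by
  have hadd' : ((t + x : ℝ) : ℂ) ≠ 0 := by exact_mod_cast hadd
  have hsub' : ((t - x : ℝ) : ℂ) ≠ 0 := by exact_mod_cast hsub
  push_cast at hu hv hadd' hsub' ⊢
  rw [hu, hv, show p ^ 2 / (t + x) = (t + x) * (p / (t + x)) ^ 2 by field_simp,
    show q ^ 2 / (t - x) = (t - x) * (q / (t - x)) ^ 2 by field_simp]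
  generalize p / (t + x) = X
  generalize q / (t - x) = Y
  linear_combination (Real.pi * κ) ^ 2 * ((t + x) * X ^ 2 + (t - x) * Y ^ 2) * Complex.I_sq

lemma energy_add_flux_eq_integral_sq {κ t a b P Λ : ℝ} {f : ℝ → ℂ} (hf : Continuous f) (hab : a ≤ b)
    (hadd : ∀ x ∈ Icc a b, 0 < t + x) (hsub : ∀ x ∈ Icc a b, 0 < t - x)
    (hb : Real.log (t - b) + P = Real.log (t + b))
    (ha : Real.log (t - a) + P = Real.log (t + a) + Λ) {u v : ℝ → ℝ}
    (hu : ∀ x ∈ Icc a b, (u x : ℂ) = Complex.I * Real.pi * κ *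
      (f (Real.log (t + x)) / ((t + x : ℝ) : ℂ) + f (Real.log (t - x) + P) / ((t - x : ℝ) : ℂ)))
    (hv : ∀ x ∈ Icc a b, (v x : ℂ) = Complex.I * Real.pi * κ *
      (f (Real.log (t + x)) / ((t + x : ℝ) : ℂ) - f (Real.log (t - x) + P) / ((t - x : ℝ) : ℂ))) :
    ((t * ((1 / 2) * ∫ x in Ioo a b, (u x ^ 2 + v x ^ 2)) + ∫ x in Ioo a b, x * u x * v x :
        ℝ) : ℂ) = -(Real.pi * κ) ^ 2 * ∫ s in Real.log (t + a)..Real.log (t + a) + Λ, f s ^ 2 := by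
  have hX := continuousOn_comp_log_add_div hf hadd
  have hY := continuousOn_comp_log_sub_div (hf.comp (continuous_add_const P)) hsub
  have hu_cont : ContinuousOn u (Icc a b) := (continuousOn_const.mul (hX.add hY)).of_ofReal_eq hu
  have hv_cont : ContinuousOn v (Icc a b) := (continuousOn_const.mul (hX.sub hY)).of_ofReal_eq hv
  have hI₁ : IntegrableOn (fun x => u x ^ 2 + v x ^ 2) (Ioo a b) :=
    ((hu_cont.pow 2).add (hv_cont.pow 2)).integrableOn_Icc.mono_set Ioo_subset_Icc_self
  have hI₂ : IntegrableOn (fun x => x * u x * v x) (Ioo a b) :=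
    ((continuousOn_id.mul hu_cont).mul hv_cont).integrableOn_Icc.mono_set Ioo_subset_Icc_self
  have hdensity : ∀ x ∈ Ioo a b, ((t / 2 * (u x ^ 2 + v x ^ 2) + x * u x * v x : ℝ) : ℂ) =
      -(Real.pi * κ) ^ 2 * (f (Real.log (t + x)) ^ 2 / ((t + x : ℝ) : ℂ) +
        f (Real.log (t - x) + P) ^ 2 / ((t - x : ℝ) : ℂ)) := fun x hx =>
    have hx' := Ioo_subset_Icc_self hx
    energy_density_eq (hadd x hx').ne' (hsub x hx').ne' (hu x hx') (hv x hx')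
  have hIcc : uIcc a b = Icc a b := uIcc_of_le hab
  calc ((t * ((1 / 2) * ∫ x in Ioo a b, (u x ^ 2 + v x ^ 2)) + ∫ x in Ioo a b, x * u x * v x :
        ℝ) : ℂ)
      = ∫ x in Ioo a b, ((t / 2 * (u x ^ 2 + v x ^ 2) + x * u x * v x : ℝ) : ℂ) := by
        rw [integral_complex_ofReal, integral_add (hI₁.const_mul _) hI₂, integral_const_mul]
        ring_nf
    _ = -(Real.pi * κ) ^ 2 * ∫ x in a..b, (f (Real.log (t + x)) ^ 2 / ((t + x : ℝ) : ℂ) +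
          f (Real.log (t - x) + P) ^ 2 / ((t - x : ℝ) : ℂ)) := by
        rw [setIntegral_congr_fun measurableSet_Ioo hdensity, integral_const_mul,
          intervalIntegral.integral_of_le hab, integral_Ioc_eq_integral_Ioo]
    _ = -(Real.pi * κ) ^ 2 * ∫ s in Real.log (t + a)..Real.log (t + a) + Λ, f s ^ 2 := by
        rw [integral_comp_log_add_div_add_comp_log_sub_div (g := fun s => f s ^ 2) (by fun_prop)
          (hIcc ▸ hadd) (hIcc ▸ hsub) hb ha]

lemma one_lt_div_mul_div {ℓ₁ ℓ₂ : ℝ} (h₁ : ℓ₁ < 1) (h₂ : ℓ₂ < 1) (hℓ : 0 < ℓ₁ + ℓ₂) :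
    1 < (1 + ℓ₁) / (1 - ℓ₂) * ((1 + ℓ₂) / (1 - ℓ₁)) := by
  rw [div_mul_div_comm, one_lt_div (by nlinarith)]
  nlinarith

lemma log_sub_mul_add_log_div {t ℓ : ℝ} (ht : t ≠ 0) (h₁ : 1 + ℓ ≠ 0) (h₂ : 1 - ℓ ≠ 0) :
    Real.log (t - ℓ * t) + Real.log ((1 + ℓ) / (1 - ℓ)) = Real.log (t + ℓ * t) := by
  rw [← Real.log_mul (by rw [← one_sub_mul]; positivity) (by positivity)]
  congr 1
  field_simp

lemma log_add_mul_add_log_div {t ℓ₁ ℓ₂ : ℝ} (ht : t ≠ 0) (h₁ : 1 + ℓ₁ ≠ 0) (h₁' : 1 - ℓ₁ ≠ 0)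
    (h₂ : 1 + ℓ₂ ≠ 0) (h₂' : 1 - ℓ₂ ≠ 0) :
    Real.log (t - -ℓ₁ * t) + Real.log ((1 + ℓ₂) / (1 - ℓ₂)) =
      Real.log (t + -ℓ₁ * t) + Real.log ((1 + ℓ₁) / (1 - ℓ₂) * ((1 + ℓ₂) / (1 - ℓ₁))) := by
  rw [show t - -ℓ₁ * t = t * (1 + ℓ₁) by ring, show t + -ℓ₁ * t = t * (1 - ℓ₁) by ring,
    ← Real.log_mul (by positivity) (by positivity), ← Real.log_mul (by positivity) (by positivity)]
  congr 1
  field_simp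

theorem energy_identity_general
    (ℓ₁ ℓ₂ L₀ t₀ α β κ : ℝ)
    (hℓ₁' : ℓ₁ < 1) (hℓ₂' : ℓ₂ < 1)
    (hℓ : 0 < ℓ₁ + ℓ₂) (hL₀ : 0 < L₀) (ht₀ : t₀ = L₀ / (ℓ₁ + ℓ₂))
    (hα : α = (1 + ℓ₁) / (1 - ℓ₂)) (hβ : β = (1 + ℓ₂) / (1 - ℓ₁))
    (hκ : κ = 2 / Real.log (α * β))
    (c : ℤ → ℂ)
    (hcsum : Summable fun n : ℤ => ‖(n : ℂ) * c n‖)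
    (hconj : ∀ n : ℤ, c (-n) = (starRingEnd ℂ) (c n))
    (C : ℤ → ℂ)
    (hC : ∀ n : ℤ, C n = c n *
      Complex.exp (Complex.I * n * Real.pi * κ * Real.log ((1 + ℓ₂) / (1 - ℓ₂))))
    (Φx : ℝ → ℝ → ℝ)
    (hΦx : ∀ t : ℝ, t₀ ≤ t → ∀ x : ℝ, -ℓ₁ * t ≤ x → x ≤ ℓ₂ * t →
      (Φx x t : ℂ) = Complex.I * Real.pi * κ * ∑' n : ℤ, (n : ℂ) *
        (c n * Complex.exp (Complex.I * n * Real.pi * κ * Real.log (t + x)) /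
            ((t + x : ℝ) : ℂ) +
         C n * Complex.exp (Complex.I * n * Real.pi * κ * Real.log (t - x)) /
            ((t - x : ℝ) : ℂ)))
    (Φt : ℝ → ℝ → ℝ)
    (hΦt : ∀ t : ℝ, t₀ ≤ t → ∀ x : ℝ, -ℓ₁ * t ≤ x → x ≤ ℓ₂ * t →
      (Φt x t : ℂ) = Complex.I * Real.pi * κ * ∑' n : ℤ, (n : ℂ) *
        (c n * Complex.exp (Complex.I * n * Real.pi * κ * Real.log (t + x)) /
            ((t + x : ℝ) : ℂ) -
         C n * Complex.exp (Complex.I * n * Real.pi * κ * Real.log (t - x)) /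
            ((t - x : ℝ) : ℂ)))
    (E : ℝ → ℝ)
    (hE : ∀ t : ℝ, E t = (1 / 2) * ∫ x in Set.Ioo (-ℓ₁ * t) (ℓ₂ * t),
      ((Φx x t) ^ 2 + (Φt x t) ^ 2))
    (S : ℝ) (hS : S = 2 * Real.pi ^ 2 * κ * ∑' n : ℤ, ‖(n : ℂ) * c n‖ ^ 2)
    :
    ∀ t : ℝ, t₀ ≤ t →
      t * E t + (∫ x in Set.Ioo (-ℓ₁ * t) (ℓ₂ * t), x * Φx x t * Φt x t) = S := by
  intro t ht
  have htpos : 0 < t := (div_pos hL₀ hℓ).trans_le (ht₀ ▸ ht)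
  have hκΛ : κ * Real.log (α * β) = 2 := by
    rw [hκ, div_mul_cancel₀ _ (Real.log_pos (hα ▸ hβ ▸ one_lt_div_mul_div hℓ₁' hℓ₂' hℓ)).ne']
  have hadd : ∀ x ∈ Icc (-ℓ₁ * t) (ℓ₂ * t), 0 < t + x := fun x hx => by
    nlinarith [hx.1]
  have hsub : ∀ x ∈ Icc (-ℓ₁ * t) (ℓ₂ * t), 0 < t - x := fun x hx => by
    nlinarith [hx.2]
  have hb := log_sub_mul_add_log_div (ℓ := ℓ₂) htpos.ne' (by linarith) (by linarith)
  have ha := log_add_mul_add_log_div (ℓ₁ := ℓ₁) (ℓ₂ := ℓ₂) htpos.ne' (by linarith) (by linarith)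
    (by linarith) (by linarith)
  rw [← hα, ← hβ] at ha
  have hC' : ∀ n, C n = c n * wave κ n (Real.log ((1 + ℓ₂) / (1 - ℓ₂))) := hC
  have hCsum : Summable fun n : ℤ => ‖(n : ℂ) * C n‖ :=
    hcsum.congr fun n => by rw [hC', ← mul_assoc, norm_mul _ (wave κ n _), norm_wave, mul_one]
  have hCc : ∀ s, waveSum κ (fun n => n * C n) s =
      waveSum κ (fun n => n * c n) (s + Real.log ((1 + ℓ₂) / (1 - ℓ₂))) := fun s => by
    simp only [← waveSum_add, hC', mul_assoc]
  have hu := fun x (hx : x ∈ Icc (-ℓ₁ * t) (ℓ₂ * t)) => (hΦx t ht x hx.1 hx.2).trans <|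
    congrArg _ ((tsum_intCast_mul_add_div hcsum hCsum _ _ _ _).trans (by rw [hCc]))
  have hv := fun x (hx : x ∈ Icc (-ℓ₁ * t) (ℓ₂ * t)) => (hΦt t ht x hx.1 hx.2).trans <|
    congrArg _ ((tsum_intCast_mul_sub_div hcsum hCsum _ _ _ _).trans (by rw [hCc]))
  apply Complex.ofReal_injective
  rw [hE, energy_add_flux_eq_integral_sq (continuous_waveSum hcsum) (by nlinarith) hadd hsub hb ha hu hv,
    integral_waveSum_sq hcsum hκΛ, tsum_mul_neg_eq_neg_tsum_norm_sq, hS]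
  · push_cast
    linear_combination (Real.pi ^ 2 * κ * ∑' n : ℤ, (‖(n : ℂ) * c n‖ : ℂ) ^ 2) *
      (by exact_mod_cast hκΛ : (κ : ℂ) * Real.log (α * β) = 2)
  · intro n
    rw [hconj]
    push_cast
    simp

/-- exact energy identity
`t·E(t) + ∫_{−ℓ₁t}^{ℓ₂t} x·φₓ·φ_t dx = S` for every `t ≥ t₀`. -/
theorem energy_identity
    (ℓ₁ ℓ₂ L₀ t₀ α β κ : ℝ)
    (hℓ₁ : 0 ≤ ℓ₁) (hℓ₁' : ℓ₁ < 1) (hℓ₂ : 0 ≤ ℓ₂) (hℓ₂' : ℓ₂ < 1)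
    (hℓ : 0 < ℓ₁ + ℓ₂) (hL₀ : 0 < L₀) (ht₀ : t₀ = L₀ / (ℓ₁ + ℓ₂))
    (hα : α = (1 + ℓ₁) / (1 - ℓ₂)) (hβ : β = (1 + ℓ₂) / (1 - ℓ₁))
    (hκ : κ = 2 / Real.log (α * β))
    (c : ℤ → ℂ) (hc0 : c 0 = 0)
    (hcsum : Summable fun n : ℤ => ‖(n : ℂ) * c n‖)
    (hconj : ∀ n : ℤ, c (-n) = (starRingEnd ℂ) (c n))
    (C : ℤ → ℂ)
    (hC : ∀ n : ℤ, C n = c n *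
      Complex.exp (Complex.I * n * Real.pi * κ * Real.log ((1 + ℓ₂) / (1 - ℓ₂))))
    (Φx : ℝ → ℝ → ℝ)
    (hΦx : ∀ t : ℝ, t₀ ≤ t → ∀ x : ℝ, -ℓ₁ * t ≤ x → x ≤ ℓ₂ * t →
      (Φx x t : ℂ) = Complex.I * Real.pi * κ * ∑' n : ℤ, (n : ℂ) *
        (c n * Complex.exp (Complex.I * n * Real.pi * κ * Real.log (t + x)) /
            ((t + x : ℝ) : ℂ) +
         C n * Complex.exp (Complex.I * n * Real.pi * κ * Real.log (t - x)) /
            ((t - x : ℝ) : ℂ)))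
    (Φt : ℝ → ℝ → ℝ)
    (hΦt : ∀ t : ℝ, t₀ ≤ t → ∀ x : ℝ, -ℓ₁ * t ≤ x → x ≤ ℓ₂ * t →
      (Φt x t : ℂ) = Complex.I * Real.pi * κ * ∑' n : ℤ, (n : ℂ) *
        (c n * Complex.exp (Complex.I * n * Real.pi * κ * Real.log (t + x)) /
            ((t + x : ℝ) : ℂ) -
         C n * Complex.exp (Complex.I * n * Real.pi * κ * Real.log (t - x)) /
            ((t - x : ℝ) : ℂ)))
    (E : ℝ → ℝ)
    (hE : ∀ t : ℝ, E t = (1 / 2) * ∫ x in Set.Ioo (-ℓ₁ * t) (ℓ₂ * t),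
      ((Φx x t) ^ 2 + (Φt x t) ^ 2))
    (S : ℝ) (hS : S = 2 * Real.pi ^ 2 * κ * ∑' n : ℤ, ‖(n : ℂ) * c n‖ ^ 2)
    :
    ∀ t : ℝ, t₀ ≤ t →
      t * E t + (∫ x in Set.Ioo (-ℓ₁ * t) (ℓ₂ * t), x * Φx x t * Φt x t) = S :=
  energy_identity_general ℓ₁ ℓ₂ L₀ t₀ α β κ hℓ₁' hℓ₂' hℓ hL₀ ht₀ hα hβ hκ c hcsum hconj C hC Φx hΦx
    Φt hΦt E hE S hS
end

section
/- For every t ≥ t₀, the energy satisfies ((1−L)/(1+L))·t₀·E(t₀)/t ≤ E(t) ≤ ((1+L)/(1−L))·t₀·E(t₀)/t, where L = max{ℓ₁,ℓ₂}. -/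
/-!
Put `f(s) = ∑ₙ n cₙ e^{inπκs}` (`waveProfile`) and `δ = log((1+ℓ₂)/(1-ℓ₂))`. The two series are
`iπκ (A ± B)` with `A = f(log(t+x))/(t+x)` and `B = f(log(t-x)+δ)/(t-x)`, so by the parallelogram
law `φₓ² + φ_t² = 2(πκ)²(|A|² + |B|²)`. After the substitutions `y = t + x` and `y = t - x`, both
pieces of `E(t)` are integrals of `g(log y)/y²` with `g = |f|²` (resp. `g = |f(· + δ)|²`), and
`∫ g(log y)/y² dy` equals `∫ g(s) ds` over the logarithmic interval up to the factor `1/y`, which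
lies between `1/((1+L)t)` and `1/((1-L)t)`. The two logarithmic intervals are consecutive and
together have length `log(αβ)`, a period of `|f|²` because `κ log(αβ) = 2`. Hence `t E(t)` lies
between `P/(1+L)` and `P/(1-L)` for the constant `P = (πκ)² ∫₀^{log αβ} |f|²`, and comparing the
bounds at `t` and `t₀` gives the claim.
-/

open MeasureTheory Real Set

lemma sq_add_sq_of_ofReal_eq_mul_add_sub {r q : ℝ} {z A B : ℂ}
    (hr : (r : ℂ) = z * (A + B)) (hq : (q : ℂ) = z * (A - B)) :
    r ^ 2 + q ^ 2 = 2 * ‖z‖ ^ 2 * (‖A‖ ^ 2 + ‖B‖ ^ 2) := by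
  have hr2 : r ^ 2 = ‖z * (A + B)‖ ^ 2 := by rw [← hr, Complex.norm_real, Real.norm_eq_abs, sq_abs]
  have hq2 : q ^ 2 = ‖z * (A - B)‖ ^ 2 := by rw [← hq, Complex.norm_real, Real.norm_eq_abs, sq_abs]
  rw [hr2, hq2, norm_mul, norm_mul, mul_pow, mul_pow, ← mul_add,
    parallelogram_law_with_norm ℂ A B]
  ring

noncomputable def waveProfile (c : ℤ → ℂ) (κ s : ℝ) : ℂ :=
  ∑' n : ℤ, (n : ℂ) * (c n * Complex.exp (Complex.I * n * π * κ * s))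

section waveProfile

variable {c C : ℤ → ℂ} {κ δ : ℝ}

lemma norm_waveProfile_term (s : ℝ) (n : ℤ) :
    ‖(n : ℂ) * (c n * Complex.exp (Complex.I * n * π * κ * s))‖ = ‖(n : ℂ) * c n‖ := by
  rw [show Complex.I * n * π * κ * s = ((n * π * κ * s : ℝ) : ℂ) * Complex.I by
      push_cast; ring, ← mul_assoc, norm_mul _ (Complex.exp _),
    Complex.norm_exp_ofReal_mul_I, mul_one]

lemma summable_waveProfile_term (hc : Summable fun n : ℤ => ‖(n : ℂ) * c n‖) (s : ℝ) :
    Summable fun n : ℤ => (n : ℂ) * (c n * Complex.exp (Complex.I * n * π * κ * s)) :=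
  .of_norm <| by simpa only [norm_waveProfile_term] using hc

lemma continuous_waveProfile (hc : Summable fun n : ℤ => ‖(n : ℂ) * c n‖) :
    Continuous (waveProfile c κ) :=
  continuous_tsum (fun n => by fun_prop) hc fun n s => (norm_waveProfile_term s n).le

lemma waveProfile_periodic {T : ℝ} (hκT : κ * T = 2) : Function.Periodic (waveProfile c κ) T := by
  intro s
  refine tsum_congr fun n => ?_
  have hshift : Complex.I * n * π * κ * ((s + T : ℝ) : ℂ) =
      Complex.I * n * π * κ * s + n * (2 * π * Complex.I) := by
    rw [← show ((κ * T : ℝ) : ℂ) = 2 by rw [hκT]; norm_num]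
    push_cast; ring
  rw [hshift, Complex.exp_add, Complex.exp_int_mul_two_pi_mul_I, mul_one]

lemma hasSum_waveProfile_div (hc : Summable fun n : ℤ => ‖(n : ℂ) * c n‖) (s u : ℝ) :
    HasSum (fun n : ℤ => (n : ℂ) * (c n * Complex.exp (Complex.I * n * π * κ * s) / (u : ℂ)))
      (waveProfile c κ s / u) := by
  simpa only [mul_div_assoc, waveProfile] using
    (summable_waveProfile_term hc s).hasSum.div_const (u : ℂ)

lemma hasSum_waveProfile_shift_div (hc : Summable fun n : ℤ => ‖(n : ℂ) * c n‖)
    (hC : ∀ n : ℤ, C n = c n * Complex.exp (Complex.I * n * π * κ * δ)) (s v : ℝ) :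
    HasSum (fun n : ℤ => (n : ℂ) * (C n * Complex.exp (Complex.I * n * π * κ * s) / (v : ℂ)))
      (waveProfile c κ (s + δ) / v) := by
  convert hasSum_waveProfile_div hc (s + δ) v using 3 with n
  rw [hC, mul_assoc, ← Complex.exp_add]
  push_cast
  ring_nf

lemma sq_add_sq_eq_waveProfile (hc : Summable fun n : ℤ => ‖(n : ℂ) * c n‖)
    (hC : ∀ n : ℤ, C n = c n * Complex.exp (Complex.I * n * π * κ * δ)) {φx φt s s' u v : ℝ}
    (hφx : (φx : ℂ) = Complex.I * π * κ * ∑' n : ℤ, (n : ℂ) *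
      (c n * Complex.exp (Complex.I * n * π * κ * s) / (u : ℂ) +
        C n * Complex.exp (Complex.I * n * π * κ * s') / (v : ℂ)))
    (hφt : (φt : ℂ) = Complex.I * π * κ * ∑' n : ℤ, (n : ℂ) *
      (c n * Complex.exp (Complex.I * n * π * κ * s) / (u : ℂ) -
        C n * Complex.exp (Complex.I * n * π * κ * s') / (v : ℂ))) :
    φx ^ 2 + φt ^ 2 =
      2 * (π * κ) ^ 2 *
        (‖waveProfile c κ s‖ ^ 2 / u ^ 2 + ‖waveProfile c κ (s' + δ)‖ ^ 2 / v ^ 2) := by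
  have hA := hasSum_waveProfile_div (κ := κ) hc s u
  have hB := hasSum_waveProfile_shift_div hc hC s' v
  simp only [mul_add, mul_sub] at hφx hφt
  rw [(hA.add hB).tsum_eq] at hφx
  rw [(hA.sub hB).tsum_eq] at hφt
  rw [sq_add_sq_of_ofReal_eq_mul_add_sub hφx hφt]
  simp only [norm_mul, norm_div, Complex.norm_I, Complex.norm_real, Real.norm_eq_abs, mul_pow,
    div_pow, sq_abs, one_mul]

end waveProfile

lemma integral_comp_log_mul_inv {g : ℝ → ℝ} (hg : Continuous g) {u v : ℝ} (hu : 0 < u)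
    (hv : 0 < v) : ∫ x in u..v, g (log x) * x⁻¹ = ∫ s in log u..log v, g s := by
  have hpos : ∀ x ∈ uIcc u v, 0 < x := fun x hx => (lt_min hu hv).trans_le hx.1
  exact intervalIntegral.integral_comp_mul_deriv
    (fun x hx => Real.hasDerivAt_log (hpos x hx).ne')
    (continuousOn_inv₀.mono fun x hx => (hpos x hx).ne') hg

lemma continuousOn_comp_log_div_sq {g : ℝ → ℝ} (hg : Continuous g) :
    ContinuousOn (fun y => g (log y) / y ^ 2) (Ioi 0) :=
  (hg.comp_continuousOn (continuousOn_log.mono fun _ hy => hy.ne')).div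
    (continuous_pow 2).continuousOn fun _ hy => pow_ne_zero 2 hy.ne'

lemma integral_comp_log_div_sq_bounds {g : ℝ → ℝ} (hg : Continuous g) (hg₀ : ∀ s, 0 ≤ g s)
    {a b u v : ℝ} (ha : 0 < a) (hau : a ≤ u) (huv : u ≤ v) (hvb : v ≤ b) :
    ∫ x in u..v, g (log x) / x ^ 2 ∈
      Icc ((∫ s in log u..log v, g s) / b) ((∫ s in log u..log v, g s) / a) := by
  have hpos : ∀ x ∈ Icc u v, 0 < x := fun x hx => ha.trans_le (hau.trans hx.1)
  have hcont : ContinuousOn (fun x => g (log x) / x ^ 2) (uIcc u v) := by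
    rw [uIcc_of_le huv]; exact (continuousOn_comp_log_div_sq hg).mono fun x hx => hpos x hx
  have hcont' : ∀ d, ContinuousOn (fun x => g (log x) * x⁻¹ / d) (uIcc u v) := by
    intro d
    rw [uIcc_of_le huv]
    exact ((hg.comp_continuousOn (continuousOn_log.mono fun x hx => (hpos x hx).ne')).mul
      (continuousOn_inv₀.mono fun x hx => (hpos x hx).ne')).div_const d
  have hsq : ∀ x, g (log x) / x ^ 2 = g (log x) * x⁻¹ / x := fun x => by ring
  rw [← integral_comp_log_mul_inv hg (ha.trans_le hau) (ha.trans_le (hau.trans huv)),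
    ← intervalIntegral.integral_div, ← intervalIntegral.integral_div]
  constructor
  · refine intervalIntegral.integral_mono_on huv (hcont' b).intervalIntegrable
      hcont.intervalIntegrable fun x hx => ?_
    rw [hsq x]
    exact div_le_div_of_nonneg_left (mul_nonneg (hg₀ _) (inv_nonneg.mpr (hpos x hx).le))
      (hpos x hx) (hx.2.trans hvb)
  · refine intervalIntegral.integral_mono_on huv hcont.intervalIntegrable
      (hcont' a).intervalIntegrable fun x hx => ?_
    rw [hsq x]
    exact div_le_div_of_nonneg_left (mul_nonneg (hg₀ _) (inv_nonneg.mpr (hpos x hx).le))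
      ha (hau.trans hx.1)

lemma integral_comp_log_div_sq_add_bounds {g : ℝ → ℝ} (hg : Continuous g)
    (hg₀ : ∀ s, 0 ≤ g s) {T δ ℓ₁ ℓ₂ t : ℝ} (hgT : Function.Periodic g T)
    (hℓ₁ : 0 ≤ ℓ₁) (hℓ₁' : ℓ₁ < 1) (hℓ₂ : 0 ≤ ℓ₂) (hℓ₂' : ℓ₂ < 1) (ht : 0 < t)
    (hδ : δ = log ((1 + ℓ₂) / (1 - ℓ₂)))
    (hT : T = log ((1 + ℓ₁) / (1 - ℓ₂) * ((1 + ℓ₂) / (1 - ℓ₁)))) :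
    (∫ y in (1 - ℓ₁) * t..(1 + ℓ₂) * t, g (log y) / y ^ 2) +
        ∫ y in (1 - ℓ₂) * t..(1 + ℓ₁) * t, g (log y + δ) / y ^ 2 ∈
      Icc ((∫ s in 0..T, g s) / ((1 + max ℓ₁ ℓ₂) * t))
        ((∫ s in 0..T, g s) / ((1 - max ℓ₁ ℓ₂) * t)) := by
  have h₁ : 0 < 1 - ℓ₁ := by linarith
  have h₂ : 0 < 1 - ℓ₂ := by linarith
  have hL : 0 < (1 - max ℓ₁ ℓ₂) * t := mul_pos (by simp [hℓ₁', hℓ₂']) ht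
  have hmono : ∀ {x y : ℝ}, x ≤ y → x * t ≤ y * t := fun h => mul_le_mul_of_nonneg_right h ht.le
  have hI₁ := integral_comp_log_div_sq_bounds hg hg₀ (u := (1 - ℓ₁) * t) (v := (1 + ℓ₂) * t)
    (b := (1 + max ℓ₁ ℓ₂) * t) hL
    (hmono (by linarith [le_max_left ℓ₁ ℓ₂])) (hmono (by linarith))
    (hmono (by linarith [le_max_right ℓ₁ ℓ₂]))
  have hI₂ := integral_comp_log_div_sq_bounds (hg.comp (continuous_add_const δ))
    (fun s => hg₀ (s + δ)) (u := (1 - ℓ₂) * t) (v := (1 + ℓ₁) * t)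
    (b := (1 + max ℓ₁ ℓ₂) * t) hL (hmono (by linarith [le_max_right ℓ₁ ℓ₂])) (hmono (by linarith))
    (hmono (by linarith [le_max_left ℓ₁ ℓ₂]))
  have hlow : log ((1 - ℓ₂) * t) + δ = log ((1 + ℓ₂) * t) := by
    rw [hδ, ← log_mul (by positivity) (by positivity)]
    congr 1; field_simp
  have hhigh : log ((1 + ℓ₁) * t) + δ = log ((1 - ℓ₁) * t) + T := by
    rw [hδ, hT, ← log_mul (by positivity) (by positivity),
      ← log_mul (by positivity) (by positivity)]
    congr 1; field_simp
  have hperiod : (∫ s in log ((1 - ℓ₁) * t)..log ((1 + ℓ₂) * t), g s) +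
      ∫ s in log ((1 - ℓ₂) * t)..log ((1 + ℓ₁) * t), g (s + δ) = ∫ s in 0..T, g s := by
    rw [intervalIntegral.integral_comp_add_right g δ, hlow, hhigh,
      intervalIntegral.integral_add_adjacent_intervals (hg.intervalIntegrable _ _)
        (hg.intervalIntegrable _ _), hgT.intervalIntegral_add_eq _ 0, zero_add]
  simp only [Function.comp_apply] at hI₂
  rw [← hperiod, add_div, add_div]
  exact ⟨add_le_add hI₁.1 hI₂.1, add_le_add hI₁.2 hI₂.2⟩

lemma setIntegral_Ioo_comp_add_add_comp_sub {F G : ℝ → ℝ} {a b t : ℝ} (hab : a ≤ b)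
    (hF : IntervalIntegrable (fun x => F (t + x)) volume a b)
    (hG : IntervalIntegrable (fun x => G (t - x)) volume a b) :
    ∫ x in Ioo a b, (F (t + x) + G (t - x)) =
      (∫ y in t + a..t + b, F y) + ∫ y in t - b..t - a, G y := by
  rw [← integral_Ioc_eq_integral_Ioo, ← intervalIntegral.integral_of_le hab,
    intervalIntegral.integral_add hF hG, intervalIntegral.integral_comp_add_left,
    intervalIntegral.integral_comp_sub_left]

lemma energy_eq_integral_comp_log {ℓ₁ ℓ₂ t₀ κ δ t : ℝ} {c C : ℤ → ℂ} {Φx Φt : ℝ → ℝ → ℝ}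
    {E : ℝ → ℝ} (hℓ₁' : ℓ₁ < 1) (hℓ₂' : ℓ₂ < 1)
    (hc : Summable fun n : ℤ => ‖(n : ℂ) * c n‖)
    (hC : ∀ n : ℤ, C n = c n * Complex.exp (Complex.I * n * π * κ * δ))
    (hΦx : ∀ t : ℝ, t₀ ≤ t → ∀ x : ℝ, -ℓ₁ * t ≤ x → x ≤ ℓ₂ * t →
      (Φx x t : ℂ) = Complex.I * π * κ * ∑' n : ℤ, (n : ℂ) *
        (c n * Complex.exp (Complex.I * n * π * κ * log (t + x)) / ((t + x : ℝ) : ℂ) +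
         C n * Complex.exp (Complex.I * n * π * κ * log (t - x)) / ((t - x : ℝ) : ℂ)))
    (hΦt : ∀ t : ℝ, t₀ ≤ t → ∀ x : ℝ, -ℓ₁ * t ≤ x → x ≤ ℓ₂ * t →
      (Φt x t : ℂ) = Complex.I * π * κ * ∑' n : ℤ, (n : ℂ) *
        (c n * Complex.exp (Complex.I * n * π * κ * log (t + x)) / ((t + x : ℝ) : ℂ) -
         C n * Complex.exp (Complex.I * n * π * κ * log (t - x)) / ((t - x : ℝ) : ℂ)))
    (hE : ∀ t : ℝ, E t = (1 / 2) * ∫ x in Ioo (-ℓ₁ * t) (ℓ₂ * t), (Φx x t ^ 2 + Φt x t ^ 2))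
    (ht₀ : t₀ ≤ t) (hab : -ℓ₁ * t ≤ ℓ₂ * t) (ht : 0 < t) :
    E t = (π * κ) ^ 2 *
      ((∫ y in (1 - ℓ₁) * t..(1 + ℓ₂) * t, ‖waveProfile c κ (log y)‖ ^ 2 / y ^ 2) +
        ∫ y in (1 - ℓ₂) * t..(1 + ℓ₁) * t, ‖waveProfile c κ (log y + δ)‖ ^ 2 / y ^ 2) := by
  have hpos : ∀ x ∈ uIcc (-ℓ₁ * t) (ℓ₂ * t), 0 < t + x ∧ 0 < t - x := by
    rw [uIcc_of_le hab]
    exact fun x hx => ⟨by nlinarith [hx.1], by nlinarith [hx.2]⟩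
  have hg : Continuous fun s => ‖waveProfile c κ s‖ ^ 2 := (continuous_waveProfile hc).norm.pow 2
  have hF := ((continuousOn_comp_log_div_sq hg).comp (continuous_const_add t).continuousOn
    fun x hx => (hpos x hx).1).intervalIntegrable (μ := volume)
  have hG := ((continuousOn_comp_log_div_sq (hg.comp (continuous_add_const δ))).comp
    (continuous_sub_left t).continuousOn fun x hx => (hpos x hx).2).intervalIntegrable (μ := volume)
  rw [hE t, setIntegral_congr_fun measurableSet_Ioo fun x hx =>
      sq_add_sq_eq_waveProfile hc hC (hΦx t ht₀ x hx.1.le hx.2.le) (hΦt t ht₀ x hx.1.le hx.2.le),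
    integral_const_mul, setIntegral_Ioo_comp_add_add_comp_sub
      (F := fun y => ‖waveProfile c κ (log y)‖ ^ 2 / y ^ 2)
      (G := fun y => ‖waveProfile c κ (log y + δ)‖ ^ 2 / y ^ 2) hab hF hG]
  rw [show t + -ℓ₁ * t = (1 - ℓ₁) * t by ring, show t + ℓ₂ * t = (1 + ℓ₂) * t by ring,
    show t - ℓ₂ * t = (1 - ℓ₂) * t by ring, show t - -ℓ₁ * t = (1 + ℓ₁) * t by ring]
  ring

lemma energy_comparison_of_mem_Icc {P L t₀ t e₀ e : ℝ} (hL : 0 < 1 - L) (hL' : 0 < 1 + L)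
    (ht₀ : 0 < t₀) (ht : 0 < t) (he₀ : e₀ ∈ Icc (P / ((1 + L) * t₀)) (P / ((1 - L) * t₀)))
    (he : e ∈ Icc (P / ((1 + L) * t)) (P / ((1 - L) * t))) :
    (1 - L) / (1 + L) * (t₀ * e₀) / t ≤ e ∧ e ≤ (1 + L) / (1 - L) * (t₀ * e₀) / t := by
  have hupper : t₀ * e₀ ≤ P / (1 - L) := by
    rw [mul_comm, ← le_div_iff₀ ht₀, div_div]; exact he₀.2
  have hlower : P / (1 + L) ≤ t₀ * e₀ := by
    rw [mul_comm, ← div_le_iff₀ ht₀, div_div]; exact he₀.1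
  constructor
  · calc (1 - L) / (1 + L) * (t₀ * e₀) / t ≤ (1 - L) / (1 + L) * (P / (1 - L)) / t := by gcongr
      _ = P / ((1 + L) * t) := by field_simp
      _ ≤ e := he.1
  · calc e ≤ P / ((1 - L) * t) := he.2
      _ = (1 + L) / (1 - L) * (P / (1 + L)) / t := by field_simp
      _ ≤ (1 + L) / (1 - L) * (t₀ * e₀) / t := by gcongr

theorem energy_comparison_initial_general
    (ℓ₁ ℓ₂ L₀ t₀ α β κ : ℝ)
    (hℓ₁ : 0 ≤ ℓ₁) (hℓ₁' : ℓ₁ < 1) (hℓ₂ : 0 ≤ ℓ₂) (hℓ₂' : ℓ₂ < 1)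
    (hℓ : 0 < ℓ₁ + ℓ₂) (hL₀ : 0 < L₀) (ht₀ : t₀ = L₀ / (ℓ₁ + ℓ₂))
    (hα : α = (1 + ℓ₁) / (1 - ℓ₂)) (hβ : β = (1 + ℓ₂) / (1 - ℓ₁))
    (hκ : κ = 2 / Real.log (α * β))
    (L : ℝ) (hL : L = max ℓ₁ ℓ₂)
    (c : ℤ → ℂ)
    (hcsum : Summable fun n : ℤ => ‖(n : ℂ) * c n‖)
    (C : ℤ → ℂ)
    (hC : ∀ n : ℤ, C n = c n *
      Complex.exp (Complex.I * n * Real.pi * κ * Real.log ((1 + ℓ₂) / (1 - ℓ₂))))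
    (Φx : ℝ → ℝ → ℝ)
    (hΦx : ∀ t : ℝ, t₀ ≤ t → ∀ x : ℝ, -ℓ₁ * t ≤ x → x ≤ ℓ₂ * t →
      (Φx x t : ℂ) = Complex.I * Real.pi * κ * ∑' n : ℤ, (n : ℂ) *
        (c n * Complex.exp (Complex.I * n * Real.pi * κ * Real.log (t + x)) /
            ((t + x : ℝ) : ℂ) +
         C n * Complex.exp (Complex.I * n * Real.pi * κ * Real.log (t - x)) /
            ((t - x : ℝ) : ℂ)))
    (Φt : ℝ → ℝ → ℝ)
    (hΦt : ∀ t : ℝ, t₀ ≤ t → ∀ x : ℝ, -ℓ₁ * t ≤ x → x ≤ ℓ₂ * t →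
      (Φt x t : ℂ) = Complex.I * Real.pi * κ * ∑' n : ℤ, (n : ℂ) *
        (c n * Complex.exp (Complex.I * n * Real.pi * κ * Real.log (t + x)) /
            ((t + x : ℝ) : ℂ) -
         C n * Complex.exp (Complex.I * n * Real.pi * κ * Real.log (t - x)) /
            ((t - x : ℝ) : ℂ)))
    (E : ℝ → ℝ)
    (hE : ∀ t : ℝ, E t = (1 / 2) * ∫ x in Set.Ioo (-ℓ₁ * t) (ℓ₂ * t),
      ((Φx x t) ^ 2 + (Φt x t) ^ 2))
    :
    ∀ t : ℝ, t₀ ≤ t →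
      (1 - L) / (1 + L) * (t₀ * E t₀) / t ≤ E t ∧
      E t ≤ (1 + L) / (1 - L) * (t₀ * E t₀) / t := by
  intro t ht
  subst hL
  have ht₀pos : 0 < t₀ := ht₀ ▸ div_pos hL₀ hℓ
  have hαβ : 1 < α * β := by
    rw [hα, hβ, div_mul_div_comm, one_lt_div (by nlinarith)]
    nlinarith
  have hκT : κ * log (α * β) = 2 := by rw [hκ]; field_simp [(log_pos hαβ).ne']
  have hg : Continuous fun s => ‖waveProfile c κ s‖ ^ 2 := (continuous_waveProfile hcsum).norm.pow 2
  have hgT : Function.Periodic (fun s => ‖waveProfile c κ s‖ ^ 2) (log (α * β)) := fun s => by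
    simp only [waveProfile_periodic hκT s]
  have key : ∀ t, t₀ ≤ t → E t ∈ Icc
      ((π * κ) ^ 2 * (∫ s in 0..log (α * β), ‖waveProfile c κ s‖ ^ 2) / ((1 + max ℓ₁ ℓ₂) * t))
      ((π * κ) ^ 2 * (∫ s in 0..log (α * β), ‖waveProfile c κ s‖ ^ 2) / ((1 - max ℓ₁ ℓ₂) * t)) := by
    intro t ht
    have htpos := ht₀pos.trans_le ht
    have hbounds := integral_comp_log_div_sq_add_bounds hg (fun _ => sq_nonneg _) hgT
      hℓ₁ hℓ₁' hℓ₂ hℓ₂' htpos rfl (by rw [hα, hβ])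
    rw [energy_eq_integral_comp_log hℓ₁' hℓ₂' hcsum hC hΦx hΦt hE ht (by nlinarith) htpos,
      mul_div_assoc, mul_div_assoc]
    exact ⟨mul_le_mul_of_nonneg_left hbounds.1 (sq_nonneg _),
      mul_le_mul_of_nonneg_left hbounds.2 (sq_nonneg _)⟩
  exact energy_comparison_of_mem_Icc (sub_pos.2 (max_lt hℓ₁' hℓ₂'))
    (by positivity) ht₀pos (ht₀pos.trans_le ht) (key t₀ le_rfl) (key t ht)

/-- comparison with the initial energy:
`((1−L)/(1+L))·t₀·E(t₀)/t ≤ E(t) ≤ ((1+L)/(1−L))·t₀·E(t₀)/t` for `t ≥ t₀`. -/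
theorem energy_comparison_initial
    (ℓ₁ ℓ₂ L₀ t₀ α β κ : ℝ)
    (hℓ₁ : 0 ≤ ℓ₁) (hℓ₁' : ℓ₁ < 1) (hℓ₂ : 0 ≤ ℓ₂) (hℓ₂' : ℓ₂ < 1)
    (hℓ : 0 < ℓ₁ + ℓ₂) (hL₀ : 0 < L₀) (ht₀ : t₀ = L₀ / (ℓ₁ + ℓ₂))
    (hα : α = (1 + ℓ₁) / (1 - ℓ₂)) (hβ : β = (1 + ℓ₂) / (1 - ℓ₁))
    (hκ : κ = 2 / Real.log (α * β))
    (L : ℝ) (hL : L = max ℓ₁ ℓ₂)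
    (c : ℤ → ℂ) (hc0 : c 0 = 0)
    (hcsum : Summable fun n : ℤ => ‖(n : ℂ) * c n‖)
    (hconj : ∀ n : ℤ, c (-n) = (starRingEnd ℂ) (c n))
    (C : ℤ → ℂ)
    (hC : ∀ n : ℤ, C n = c n *
      Complex.exp (Complex.I * n * Real.pi * κ * Real.log ((1 + ℓ₂) / (1 - ℓ₂))))
    (Φx : ℝ → ℝ → ℝ)
    (hΦx : ∀ t : ℝ, t₀ ≤ t → ∀ x : ℝ, -ℓ₁ * t ≤ x → x ≤ ℓ₂ * t →
      (Φx x t : ℂ) = Complex.I * Real.pi * κ * ∑' n : ℤ, (n : ℂ) *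
        (c n * Complex.exp (Complex.I * n * Real.pi * κ * Real.log (t + x)) /
            ((t + x : ℝ) : ℂ) +
         C n * Complex.exp (Complex.I * n * Real.pi * κ * Real.log (t - x)) /
            ((t - x : ℝ) : ℂ)))
    (Φt : ℝ → ℝ → ℝ)
    (hΦt : ∀ t : ℝ, t₀ ≤ t → ∀ x : ℝ, -ℓ₁ * t ≤ x → x ≤ ℓ₂ * t →
      (Φt x t : ℂ) = Complex.I * Real.pi * κ * ∑' n : ℤ, (n : ℂ) *
        (c n * Complex.exp (Complex.I * n * Real.pi * κ * Real.log (t + x)) /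
            ((t + x : ℝ) : ℂ) -
         C n * Complex.exp (Complex.I * n * Real.pi * κ * Real.log (t - x)) /
            ((t - x : ℝ) : ℂ)))
    (E : ℝ → ℝ)
    (hE : ∀ t : ℝ, E t = (1 / 2) * ∫ x in Set.Ioo (-ℓ₁ * t) (ℓ₂ * t),
      ((Φx x t) ^ 2 + (Φt x t) ^ 2))
    :
    ∀ t : ℝ, t₀ ≤ t →
      (1 - L) / (1 + L) * (t₀ * E t₀) / t ≤ E t ∧
      E t ≤ (1 + L) / (1 - L) * (t₀ * E t₀) / t :=
  energy_comparison_initial_general ℓ₁ ℓ₂ L₀ t₀ α β κ hℓ₁ hℓ₁' hℓ₂ hℓ₂' hℓ hL₀ ht₀ hα hβ hκ L hL c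
    hcsum C hC Φx hΦx Φt hΦt E hE
end

section
/- For every positive integer M, the boundary trace at the right endpoint satisfies the exact identity ∫_{t₀}^{(αβ)^M·t₀} t·φₓ(ℓ₂t, t)² dt = 4M·S/(1−ℓ₂²)², where S = 2π²κ·Σ_{n≠0} |n c_n|². -/
/-! At `x = ℓ₂ t` the two sums in `φₓ` carry the same phase: `log ((1 + ℓ₂) t)` on one side and
`log ((1 + ℓ₂) / (1 - ℓ₂)) + log ((1 - ℓ₂) t)` on the other, the shift being exactly the one built
into `C_n`. Hence `φₓ(ℓ₂ t, t) = 2 i ω g(log t) / ((1 - ℓ₂²) t)` with `ω = πκ` and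
`g(s) = ∑ n cₙ e^{i n ω log (1 + ℓ₂)} e^{i n ω s}` an absolutely convergent trigonometric series, so
`t φₓ(ℓ₂ t, t)² = (2ω / (1 - ℓ₂²))² |g(log t)|² / t`. The substitution `s = log t` turns the integral
into `∫ |g|²` over `M` full periods `2π / ω = log (αβ)`, and Parseval (termwise integration against
the orthogonal exponentials) gives `M log (αβ) ∑ |n cₙ|²`. -/

open MeasureTheory Complex ComplexConjugate

theorem intervalIntegral_tsum_eq_of_norm_le {ι E : Type*} [Countable ι] [NormedAddCommGroup E]
    [NormedSpace ℝ E] [CompleteSpace E] {f : ι → ℝ → E} {u : ι → ℝ} (a b : ℝ)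
    (hf : ∀ i, Continuous (f i)) (hu : Summable u) (hfu : ∀ i s, ‖f i s‖ ≤ u i) :
    ∫ s in a..b, ∑' i, f i s = ∑' i, ∫ s in a..b, f i s :=
  (intervalIntegral.hasSum_integral_of_dominated_convergence (fun i _ => u i)
    (fun i => (hf i).aestronglyMeasurable) (fun i => ae_of_all _ fun s _ => hfu i s)
    (ae_of_all _ fun _ _ => hu) intervalIntegrable_const
    (ae_of_all _ fun s _ => (Summable.of_norm_bounded hu (fun i => hfu i s)).hasSum)).tsum_eq.symm

theorem intervalIntegral_comp_log_div {g : ℝ → ℝ} (hg : Continuous g) {a b : ℝ}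
    (ha : 0 < a) (hb : 0 < b) :
    ∫ t in a..b, g (Real.log t) / t = ∫ s in Real.log a..Real.log b, g s := by
  have hpos : ∀ t ∈ Set.uIcc a b, 0 < t := fun t ht =>
    (lt_inf_iff.mpr ⟨ha, hb⟩).trans_le ht.1
  simpa only [Function.comp_def, div_eq_mul_inv] using
    intervalIntegral.integral_comp_mul_deriv (fun t ht => Real.hasDerivAt_log (hpos t ht).ne')
      (continuousOn_inv₀.mono fun t ht => (hpos t ht).ne') hg

theorem norm_exp_I_mul_int_mul (n : ℤ) (ω s : ℝ) :
    ‖exp (I * n * ω * s)‖ = 1 := by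
  simpa only [ofReal_mul, ofReal_intCast, mul_assoc] using norm_exp_I_mul_ofReal (n * ω * s)

theorem conj_exp_I_mul_int_mul_mul (n m : ℤ) (ω s : ℝ) :
    conj (exp (I * n * ω * s)) * exp (I * m * ω * s) = exp (I * (m - n : ℤ) * ω * s) := by
  rw [← exp_conj, ← exp_add]
  simp only [map_mul, conj_I, conj_ofReal, map_intCast]
  push_cast
  ring_nf

theorem integral_exp_I_mul_int_mul {ω a b : ℝ} (hω : ω ≠ 0) {m : ℤ}
    (hper : ω * (b - a) = 2 * Real.pi * m) (k : ℤ) :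
    ∫ s in a..b, exp (I * k * ω * s) = if k = 0 then ((b - a : ℝ) : ℂ) else 0 := by
  split_ifs with hk
  · simp [hk]
  have hc : I * k * ω ≠ 0 := by simp [hk, hω, I_ne_zero]
  have hexp : exp (I * k * ω * b) = exp (I * k * ω * a) := by
    have : I * k * ω * b = I * k * ω * a + (k * m : ℤ) * (2 * Real.pi * I) := by
      have hperC : (ω : ℂ) * (b - a) = 2 * Real.pi * m := by exact_mod_cast hper
      push_cast
      linear_combination I * k * hperC
    rw [this, exp_add, exp_int_mul_two_pi_mul_I, mul_one]
  rw [integral_exp_mul_complex hc, hexp, sub_self, zero_div]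

noncomputable def trigSeries (d : ℤ → ℂ) (ω s : ℝ) : ℂ :=
  ∑' n : ℤ, d n * exp (I * n * ω * s)

theorem summable_mul_exp_I_mul_int_mul {d : ℤ → ℂ} (hd : Summable fun n => ‖d n‖) (ω s : ℝ) :
    Summable fun n : ℤ => d n * exp (I * n * ω * s) :=
  Summable.of_norm_bounded hd fun n => by rw [norm_mul, norm_exp_I_mul_int_mul, mul_one]

theorem continuous_trigSeries {d : ℤ → ℂ} (hd : Summable fun n => ‖d n‖) (ω : ℝ) :
    Continuous (trigSeries d ω) :=
  continuous_tsum (fun n => by fun_prop) hd fun n s => by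
    rw [norm_mul, norm_exp_I_mul_int_mul, mul_one]

theorem norm_trigSeries_le {d : ℤ → ℂ} (hd : Summable fun n => ‖d n‖) (ω s : ℝ) :
    ‖trigSeries d ω s‖ ≤ ∑' n, ‖d n‖ :=
  (norm_tsum_le_tsum_norm (summable_mul_exp_I_mul_int_mul hd ω s).norm).trans_eq <|
    tsum_congr fun n => by rw [norm_mul, norm_exp_I_mul_int_mul, mul_one]

theorem integral_conj_exp_mul_trigSeries {d : ℤ → ℂ} (hd : Summable fun n => ‖d n‖) {ω a b : ℝ}
    (hω : ω ≠ 0) {m : ℤ} (hper : ω * (b - a) = 2 * Real.pi * m) (n : ℤ) :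
    ∫ s in a..b, conj (exp (I * n * ω * s)) * trigSeries d ω s = (b - a : ℝ) * d n := by
  simp only [trigSeries, ← tsum_mul_left]
  rw [intervalIntegral_tsum_eq_of_norm_le a b (u := fun k => ‖d k‖) (fun k => by fun_prop) hd
    fun k s => by rw [norm_mul, norm_mul, RCLike.norm_conj, norm_exp_I_mul_int_mul,
      norm_exp_I_mul_int_mul, one_mul, mul_one]]
  simp_rw [mul_left_comm _ (d _), conj_exp_I_mul_int_mul_mul, intervalIntegral.integral_const_mul,
    integral_exp_I_mul_int_mul hω hper, sub_eq_zero]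
  rw [tsum_eq_single n fun k hk => by simp [hk]]
  simp [mul_comm]

theorem integral_norm_trigSeries_sq {d : ℤ → ℂ} (hd : Summable fun n => ‖d n‖) {ω a b : ℝ}
    (hω : ω ≠ 0) {m : ℤ} (hper : ω * (b - a) = 2 * Real.pi * m) :
    ∫ s in a..b, ‖trigSeries d ω s‖ ^ 2 = (b - a) * ∑' n, ‖d n‖ ^ 2 := by
  apply Complex.ofReal_injective
  have hconj : ∀ s, conj (trigSeries d ω s) = ∑' n, conj (d n) * conj (exp (I * n * ω * s)) :=
    fun s => by simp only [trigSeries, conj_tsum, map_mul]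
  calc ((∫ s in a..b, ‖trigSeries d ω s‖ ^ 2 : ℝ) : ℂ)
      = ∫ s in a..b, conj (trigSeries d ω s) * trigSeries d ω s := by
        rw [← intervalIntegral.integral_ofReal]
        simp_rw [conj_mul', ofReal_pow]
    _ = ∑' n, conj (d n) * ∫ s in a..b, conj (exp (I * n * ω * s)) * trigSeries d ω s := by
        simp_rw [hconj, ← tsum_mul_right, ← intervalIntegral.integral_const_mul, mul_assoc (conj _)]
        exact intervalIntegral_tsum_eq_of_norm_le a b (u := fun n => ‖d n‖ * ∑' k, ‖d k‖)
          (fun n => by have := continuous_trigSeries hd ω; fun_prop) (hd.mul_right _)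
          fun n s => by
            rw [norm_mul, norm_mul, RCLike.norm_conj, RCLike.norm_conj, norm_exp_I_mul_int_mul,
              one_mul]
            gcongr
            exact norm_trigSeries_le hd ω s
    _ = (((b - a) * ∑' n, ‖d n‖ ^ 2 : ℝ) : ℂ) := by
        simp_rw [integral_conj_exp_mul_trigSeries hd hω hper, mul_left_comm (conj _), conj_mul',
          tsum_mul_left]
        push_cast
        rfl

theorem setIntegral_norm_trigSeries_log_sq_div {d : ℤ → ℂ} (hd : Summable fun n => ‖d n‖)
    {ω a b : ℝ} (hω : ω ≠ 0) (ha : 0 < a) (hab : a ≤ b) {m : ℤ}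
    (hper : ω * (Real.log b - Real.log a) = 2 * Real.pi * m) :
    ∫ t in Set.Ioo a b, ‖trigSeries d ω (Real.log t)‖ ^ 2 / t =
      (Real.log b - Real.log a) * ∑' n, ‖d n‖ ^ 2 := by
  rw [← integral_Ioc_eq_integral_Ioo, ← intervalIntegral.integral_of_le hab,
    intervalIntegral_comp_log_div (g := fun s => ‖trigSeries d ω s‖ ^ 2)
      ((continuous_trigSeries hd ω).norm.pow 2) ha (ha.trans_le hab),
    integral_norm_trigSeries_sq hd hω hper]

theorem mul_exp_div_add_mul_exp_div_at_right_boundary (z : ℂ) (n : ℤ) {ω ℓ t : ℝ}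
    (hadd : 0 < 1 + ℓ) (hsub : 0 < 1 - ℓ) (ht : 0 < t) :
    z * exp (I * n * ω * Real.log (t + ℓ * t)) / ((t + ℓ * t : ℝ) : ℂ) +
        z * exp (I * n * ω * Real.log ((1 + ℓ) / (1 - ℓ))) *
          exp (I * n * ω * Real.log (t - ℓ * t)) / ((t - ℓ * t : ℝ) : ℂ) =
      ((2 / ((1 - ℓ ^ 2) * t) : ℝ) : ℂ) * (z * exp (I * n * ω * Real.log (1 + ℓ))) *
        exp (I * n * ω * Real.log t) := by
  have hlog_add : Real.log (t + ℓ * t) = Real.log (1 + ℓ) + Real.log t := by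
    rw [← Real.log_mul hadd.ne' ht.ne']; ring_nf
  have hlog_sub : Real.log ((1 + ℓ) / (1 - ℓ)) + Real.log (t - ℓ * t) =
      Real.log (1 + ℓ) + Real.log t := by
    rw [← Real.log_mul (div_pos hadd hsub).ne' (by nlinarith), ← Real.log_mul hadd.ne' ht.ne']
    congr 1
    field_simp
  have hphase_add : exp (I * n * ω * Real.log (t + ℓ * t)) =
      exp (I * n * ω * Real.log (1 + ℓ)) * exp (I * n * ω * Real.log t) := by
    rw [← exp_add, hlog_add]; push_cast; ring_nf
  have hphase_sub : exp (I * n * ω * Real.log ((1 + ℓ) / (1 - ℓ))) *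
        exp (I * n * ω * Real.log (t - ℓ * t)) =
      exp (I * n * ω * Real.log (1 + ℓ)) * exp (I * n * ω * Real.log t) := by
    rw [← exp_add, ← exp_add, ← mul_add, ← ofReal_add, hlog_sub]; push_cast; ring_nf
  rw [hphase_add, mul_assoc z, hphase_sub]
  have : ((1 : ℂ) - ℓ ^ 2) ≠ 0 := by exact_mod_cast (show (0 : ℝ) < 1 - ℓ ^ 2 by nlinarith).ne'
  have : ((1 : ℂ) + ℓ) ≠ 0 := by exact_mod_cast hadd.ne'
  have : ((1 : ℂ) - ℓ) ≠ 0 := by exact_mod_cast hsub.ne'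
  have : (t : ℂ) ≠ 0 := by exact_mod_cast ht.ne'
  push_cast
  field_simp
  ring

theorem tsum_at_right_boundary_eq_trigSeries (c : ℤ → ℂ) {ω ℓ t : ℝ}
    (hadd : 0 < 1 + ℓ) (hsub : 0 < 1 - ℓ) (ht : 0 < t) :
    ∑' n : ℤ, (n : ℂ) * (c n * exp (I * n * ω * Real.log (t + ℓ * t)) / ((t + ℓ * t : ℝ) : ℂ) +
        c n * exp (I * n * ω * Real.log ((1 + ℓ) / (1 - ℓ))) *
          exp (I * n * ω * Real.log (t - ℓ * t)) / ((t - ℓ * t : ℝ) : ℂ)) =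
      ((2 / ((1 - ℓ ^ 2) * t) : ℝ) : ℂ) *
        trigSeries (fun n => n * c n * exp (I * n * ω * Real.log (1 + ℓ))) ω (Real.log t) := by
  rw [trigSeries, ← tsum_mul_left]
  refine tsum_congr fun n => ?_
  rw [mul_exp_div_add_mul_exp_div_at_right_boundary (c n) n hadd hsub ht]
  ring

theorem mul_sq_eq_of_eq_at_right_boundary (c : ℤ → ℂ) {ω ℓ t φ : ℝ}
    (hadd : 0 < 1 + ℓ) (hsub : 0 < 1 - ℓ) (ht : 0 < t) (hω : 0 < ω)
    (hφ : (φ : ℂ) = I * ω * ∑' n : ℤ, (n : ℂ) *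
      (c n * exp (I * n * ω * Real.log (t + ℓ * t)) / ((t + ℓ * t : ℝ) : ℂ) +
        c n * exp (I * n * ω * Real.log ((1 + ℓ) / (1 - ℓ))) *
          exp (I * n * ω * Real.log (t - ℓ * t)) / ((t - ℓ * t : ℝ) : ℂ))) :
    t * φ ^ 2 = (2 * ω / (1 - ℓ ^ 2)) ^ 2 *
      (‖trigSeries (fun n => n * c n * exp (I * n * ω * Real.log (1 + ℓ))) ω (Real.log t)‖ ^ 2 /
        t) := by
  rw [tsum_at_right_boundary_eq_trigSeries c hadd hsub ht] at hφ
  have hcoef : 0 < (1 - ℓ ^ 2) * t := mul_pos (by nlinarith) ht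
  rw [← sq_abs, ← Real.norm_eq_abs, ← norm_real, hφ]
  generalize trigSeries _ ω (Real.log t) = g
  simp only [norm_mul, norm_I, norm_real, Real.norm_eq_abs, abs_of_pos hω,
    abs_of_pos (div_pos two_pos hcoef)]
  field_simp

theorem one_lt_div_mul_div_of_add_pos {ℓ₁ ℓ₂ : ℝ} (h₁ : ℓ₁ < 1) (h₂ : ℓ₂ < 1)
    (h : 0 < ℓ₁ + ℓ₂) : 1 < (1 + ℓ₁) / (1 - ℓ₂) * ((1 + ℓ₂) / (1 - ℓ₁)) := by
  rw [div_mul_div_comm, one_lt_div (mul_pos (by linarith) (by linarith))]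
  nlinarith

theorem boundary_trace_identity_right_general
    (ℓ₁ ℓ₂ L₀ t₀ α β κ : ℝ)
    (hℓ₁' : ℓ₁ < 1) (hℓ₂' : ℓ₂ < 1)
    (hℓ : 0 < ℓ₁ + ℓ₂) (hL₀ : 0 < L₀) (ht₀ : t₀ = L₀ / (ℓ₁ + ℓ₂))
    (hα : α = (1 + ℓ₁) / (1 - ℓ₂)) (hβ : β = (1 + ℓ₂) / (1 - ℓ₁))
    (hκ : κ = 2 / Real.log (α * β))
    (c : ℤ → ℂ)
    (hcsum : Summable fun n : ℤ => ‖(n : ℂ) * c n‖)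
    (C : ℤ → ℂ)
    (hC : ∀ n : ℤ, C n = c n *
      Complex.exp (Complex.I * n * Real.pi * κ * Real.log ((1 + ℓ₂) / (1 - ℓ₂))))
    (Φx : ℝ → ℝ → ℝ)
    (hΦx : ∀ t : ℝ, t₀ ≤ t → ∀ x : ℝ, -ℓ₁ * t ≤ x → x ≤ ℓ₂ * t →
      (Φx x t : ℂ) = Complex.I * Real.pi * κ * ∑' n : ℤ, (n : ℂ) *
        (c n * Complex.exp (Complex.I * n * Real.pi * κ * Real.log (t + x)) /
            ((t + x : ℝ) : ℂ) +
         C n * Complex.exp (Complex.I * n * Real.pi * κ * Real.log (t - x)) /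
            ((t - x : ℝ) : ℂ)))
    (S : ℝ) (hS : S = 2 * Real.pi ^ 2 * κ * ∑' n : ℤ, ‖(n : ℂ) * c n‖ ^ 2)
    :
    ∀ M : ℕ, 0 < M →
      ∫ t in Set.Ioo t₀ ((α * β) ^ M * t₀), t * (Φx (ℓ₂ * t) t) ^ 2 =
        4 * M * S / (1 - ℓ₂ ^ 2) ^ 2 := by
  intro M _
  have hadd : 0 < 1 + ℓ₂ := by linarith
  have hsub : 0 < 1 - ℓ₂ := by linarith
  have ht₀pos : 0 < t₀ := ht₀ ▸ div_pos hL₀ hℓ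
  have hαβ : 1 < α * β := hα ▸ hβ ▸ one_lt_div_mul_div_of_add_pos hℓ₁' hℓ₂' hℓ
  have hκpos : 0 < κ := hκ ▸ div_pos two_pos (Real.log_pos hαβ)
  have hlog_αβ : Real.log (α * β) = 2 / κ := by rw [hκ, div_div_cancel₀ two_ne_zero]
  set ω := Real.pi * κ with hω
  have hωpos : 0 < ω := mul_pos Real.pi_pos hκpos
  have hphase (z : ℂ) : z * Real.pi * κ = z * ω := by rw [hω, ofReal_mul, mul_assoc]
  set d : ℤ → ℂ := fun n => n * c n * exp (I * n * ω * Real.log (1 + ℓ₂))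
  have hnorm_d (n : ℤ) : ‖d n‖ = ‖(n : ℂ) * c n‖ := by
    rw [norm_mul, norm_exp_I_mul_int_mul, mul_one]
  have hpoint : Set.EqOn (fun t => t * Φx (ℓ₂ * t) t ^ 2)
      (fun t => (2 * ω / (1 - ℓ₂ ^ 2)) ^ 2 * (‖trigSeries d ω (Real.log t)‖ ^ 2 / t))
      (Set.Ioo t₀ ((α * β) ^ M * t₀)) := fun t ht => by
    have htpos : 0 < t := ht₀pos.trans ht.1
    have hΦ := hΦx t ht.1.le (ℓ₂ * t) (by nlinarith [mul_pos hℓ htpos]) le_rfl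
    simp only [hC, hphase] at hΦ
    exact mul_sq_eq_of_eq_at_right_boundary c hadd hsub htpos hωpos hΦ
  have hlogT : Real.log ((α * β) ^ M * t₀) - Real.log t₀ = M * Real.log (α * β) := by
    rw [Real.log_mul (by positivity) ht₀pos.ne', Real.log_pow]; ring
  rw [setIntegral_congr_fun measurableSet_Ioo hpoint, integral_const_mul,
    setIntegral_norm_trigSeries_log_sq_div (hcsum.congr fun n => (hnorm_d n).symm) hωpos.ne'
      ht₀pos (le_mul_of_one_le_left ht₀pos.le (one_le_pow₀ hαβ.le)) (m := M)
      (by rw [hlogT, hlog_αβ, hω]; field_simp; push_cast; ring), hlogT, hlog_αβ]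
  simp only [hnorm_d, hS, hω]
  have : 1 - ℓ₂ ^ 2 ≠ 0 := by nlinarith
  field_simp
  ring

/-- exact boundary-trace identity at the right endpoint:
`∫_{t₀}^{(αβ)^M t₀} t·φₓ(ℓ₂t,t)² dt = 4M·S/(1−ℓ₂²)²`. -/
theorem boundary_trace_identity_right
    (ℓ₁ ℓ₂ L₀ t₀ α β κ : ℝ)
    (hℓ₁ : 0 ≤ ℓ₁) (hℓ₁' : ℓ₁ < 1) (hℓ₂ : 0 ≤ ℓ₂) (hℓ₂' : ℓ₂ < 1)
    (hℓ : 0 < ℓ₁ + ℓ₂) (hL₀ : 0 < L₀) (ht₀ : t₀ = L₀ / (ℓ₁ + ℓ₂))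
    (hα : α = (1 + ℓ₁) / (1 - ℓ₂)) (hβ : β = (1 + ℓ₂) / (1 - ℓ₁))
    (hκ : κ = 2 / Real.log (α * β))
    (c : ℤ → ℂ) (hc0 : c 0 = 0)
    (hcsum : Summable fun n : ℤ => ‖(n : ℂ) * c n‖)
    (hconj : ∀ n : ℤ, c (-n) = (starRingEnd ℂ) (c n))
    (C : ℤ → ℂ)
    (hC : ∀ n : ℤ, C n = c n *
      Complex.exp (Complex.I * n * Real.pi * κ * Real.log ((1 + ℓ₂) / (1 - ℓ₂))))
    (Φx : ℝ → ℝ → ℝ)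
    (hΦx : ∀ t : ℝ, t₀ ≤ t → ∀ x : ℝ, -ℓ₁ * t ≤ x → x ≤ ℓ₂ * t →
      (Φx x t : ℂ) = Complex.I * Real.pi * κ * ∑' n : ℤ, (n : ℂ) *
        (c n * Complex.exp (Complex.I * n * Real.pi * κ * Real.log (t + x)) /
            ((t + x : ℝ) : ℂ) +
         C n * Complex.exp (Complex.I * n * Real.pi * κ * Real.log (t - x)) /
            ((t - x : ℝ) : ℂ)))
    (S : ℝ) (hS : S = 2 * Real.pi ^ 2 * κ * ∑' n : ℤ, ‖(n : ℂ) * c n‖ ^ 2)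
    :
    ∀ M : ℕ, 0 < M →
      ∫ t in Set.Ioo t₀ ((α * β) ^ M * t₀), t * (Φx (ℓ₂ * t) t) ^ 2 =
        4 * M * S / (1 - ℓ₂ ^ 2) ^ 2 :=
  boundary_trace_identity_right_general ℓ₁ ℓ₂ L₀ t₀ α β κ hℓ₁' hℓ₂' hℓ hL₀ ht₀ hα hβ hκ c hcsum C hC
    Φx hΦx S hS
end

section
/- Observability at one endpoint in the sharp time: if T ≥ T_ℓ where T_ℓ = (αβ − 1)·t₀ = 2L₀/((1−ℓ₁)(1−ℓ₂)), then E(t₀) ≤ (αβ(1−ℓ₂²)²/(4(1−L)))·∫_{t₀}^{t₀+T} φₓ(ℓ₂t, t)² dt, where L = max{ℓ₁,ℓ₂}. -/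
/-!
On the cone `-ℓ₁t ≤ x ≤ ℓ₂t` the solution is a sum of travelling waves: `φₓ = F(t+x) + G(t-x)`
and `φ_t = F(t+x) - G(t-x)`, where `F = logProfile c κ` and `G = logProfile C κ`. Since
`κ log(αβ) = 2`, every mode of `F` is invariant under `s ↦ αβ s` up to the factor `1/s`, so
`F s = αβ F(αβ s)`; the phase in `C` gives `G s = r F(r s)` with `r = (1+ℓ₂)/(1-ℓ₂)`. Rescaling
both halves of `E(t₀)` moves them onto the single period `[(1+ℓ₂)t₀, αβ(1+ℓ₂)t₀]` of `F²`, with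
weights `r ≤ αβ`. On the right endpoint `φₓ(ℓ₂t, t) = (1+r) F((1+ℓ₂)t)`, and for `T ≥ (αβ-1)t₀`
this trace sweeps the whole period.
-/

open MeasureTheory Set

noncomputable def logMode (c : ℤ → ℂ) (κ s : ℝ) (n : ℤ) : ℂ :=
  c n * Complex.exp (Complex.I * n * Real.pi * κ * Real.log s) / (s : ℂ)

noncomputable def logSeries (c : ℤ → ℂ) (κ s : ℝ) : ℂ :=
  Complex.I * Real.pi * κ * ∑' n : ℤ, (n : ℂ) * logMode c κ s n

noncomputable def logProfile (c : ℤ → ℂ) (κ s : ℝ) : ℝ :=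
  (logSeries c κ s).re

section LogProfile

variable {c C : ℤ → ℂ} {κ : ℝ}

lemma norm_cexp_phase (n : ℤ) (κ θ : ℝ) :
    ‖Complex.exp (Complex.I * n * Real.pi * κ * θ)‖ = 1 := by
  rw [show Complex.I * n * Real.pi * κ * θ = Complex.I * ((n * Real.pi * κ * θ : ℝ) : ℂ) by
    push_cast; ring]
  exact Complex.norm_exp_I_mul_ofReal _

lemma norm_intCast_mul_logMode {s : ℝ} (hs : 0 < s) (n : ℤ) :
    ‖(n : ℂ) * logMode c κ s n‖ = ‖(n : ℂ) * c n‖ / s := by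
  simp only [logMode, norm_mul, norm_div, norm_cexp_phase, Complex.norm_real,
    Real.norm_of_nonneg hs.le]
  ring

lemma summable_intCast_mul_logMode (hc : Summable fun n : ℤ => ‖(n : ℂ) * c n‖)
    {s : ℝ} (hs : 0 < s) : Summable fun n : ℤ => (n : ℂ) * logMode c κ s n := by
  refine Summable.of_norm ?_
  simp only [norm_intCast_mul_logMode hs]
  exact hc.div_const s

lemma summable_norm_of_phase (hc : Summable fun n : ℤ => ‖(n : ℂ) * c n‖) {θ : ℝ}
    (hC : ∀ n : ℤ, C n = c n * Complex.exp (Complex.I * n * Real.pi * κ * θ)) :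
    Summable fun n : ℤ => ‖(n : ℂ) * C n‖ := by
  simpa only [hC, ← mul_assoc, norm_mul (_ * c _), norm_cexp_phase, mul_one] using hc

lemma logMode_of_phase {r s : ℝ} (hr : 0 < r) (hs : 0 < s)
    (hC : ∀ n : ℤ, C n = c n * Complex.exp (Complex.I * n * Real.pi * κ * Real.log r)) (n : ℤ) :
    logMode C κ s n = r * logMode c κ (r * s) n := by
  have hr' : (r : ℂ) ≠ 0 := by exact_mod_cast hr.ne'
  rw [logMode, logMode, hC, Real.log_mul hr.ne' hs.ne']
  push_cast
  rw [mul_add, Complex.exp_add]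
  field_simp

lemma logProfile_of_phase {r s : ℝ} (hc : Summable fun n : ℤ => ‖(n : ℂ) * c n‖)
    (hr : 0 < r) (hs : 0 < s)
    (hC : ∀ n : ℤ, C n = c n * Complex.exp (Complex.I * n * Real.pi * κ * Real.log r)) :
    logProfile C κ s = r * logProfile c κ (r * s) := by
  have h (n : ℤ) : (n : ℂ) * logMode C κ s n = r * ((n : ℂ) * logMode c κ (r * s) n) := by
    rw [logMode_of_phase hr hs hC]; ring
  rw [logProfile, logSeries, tsum_congr h,
    (summable_intCast_mul_logMode hc (mul_pos hr hs)).tsum_mul_left, logProfile, logSeries,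
    ← Complex.re_ofReal_mul]
  congr 1
  ring

lemma logProfile_eq_mul_logProfile_mul {q s : ℝ} (hc : Summable fun n : ℤ => ‖(n : ℂ) * c n‖)
    (hq : 0 < q) (hs : 0 < s) (hκq : κ * Real.log q = 2) :
    logProfile c κ s = q * logProfile c κ (q * s) := by
  refine logProfile_of_phase hc hq hs fun n => ?_
  have : Complex.I * n * Real.pi * κ * Real.log q = n * (2 * Real.pi * Complex.I) := by
    rw [show Complex.I * n * Real.pi * κ * Real.log q
        = Complex.I * n * Real.pi * ((κ * Real.log q : ℝ) : ℂ) by push_cast; ring, hκq]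
    push_cast; ring
  rw [this, Complex.exp_int_mul_two_pi_mul_I, mul_one]

lemma continuousOn_logProfile (hc : Summable fun n : ℤ => ‖(n : ℂ) * c n‖) :
    ContinuousOn (logProfile c κ) (Ioi 0) := by
  intro s hs
  have hε : 0 < s / 2 := half_pos hs
  have hcont : ContinuousOn (logSeries c κ) (Ici (s / 2)) := by
    refine continuousOn_const.mul (continuousOn_tsum (u := fun n : ℤ => ‖(n : ℂ) * c n‖ / (s / 2))
      (fun n => ?_) (hc.div_const _) fun n x hx => ?_)
    · have hpos : ∀ x ∈ Ici (s / 2), x ≠ 0 := fun x hx => (hε.trans_le hx).ne'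
      refine continuousOn_const.mul (ContinuousOn.div ?_ Complex.continuous_ofReal.continuousOn
        fun x hx => Complex.ofReal_ne_zero.mpr (hpos x hx))
      exact continuousOn_const.mul (Complex.continuous_exp.comp_continuousOn
        (continuousOn_const.mul (Complex.continuous_ofReal.comp_continuousOn
          (Real.continuousOn_log.mono fun x hx => hpos x hx))))
    · rw [norm_intCast_mul_logMode (hε.trans_le hx)]
      exact div_le_div_of_nonneg_left (norm_nonneg _) hε hx
  exact (Complex.continuous_re.continuousAt.comp
    (hcont.continuousAt (Ici_mem_nhds (half_lt_self hs)))).continuousWithinAt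

lemma eq_logProfile_add_of_ofReal_eq {φ s₁ s₂ : ℝ}
    (hc : Summable fun n : ℤ => ‖(n : ℂ) * c n‖) (hC : Summable fun n : ℤ => ‖(n : ℂ) * C n‖)
    (hs₁ : 0 < s₁) (hs₂ : 0 < s₂)
    (h : (φ : ℂ) = Complex.I * Real.pi * κ *
      ∑' n : ℤ, (n : ℂ) * (logMode c κ s₁ n + logMode C κ s₂ n)) :
    φ = logProfile c κ s₁ + logProfile C κ s₂ := by
  simp only [mul_add] at h
  rw [(summable_intCast_mul_logMode hc hs₁).tsum_add (summable_intCast_mul_logMode hC hs₂),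
    mul_add] at h
  simpa only [logProfile, logSeries, Complex.add_re, Complex.ofReal_re] using congrArg Complex.re h

lemma eq_logProfile_sub_of_ofReal_eq {φ s₁ s₂ : ℝ}
    (hc : Summable fun n : ℤ => ‖(n : ℂ) * c n‖) (hC : Summable fun n : ℤ => ‖(n : ℂ) * C n‖)
    (hs₁ : 0 < s₁) (hs₂ : 0 < s₂)
    (h : (φ : ℂ) = Complex.I * Real.pi * κ *
      ∑' n : ℤ, (n : ℂ) * (logMode c κ s₁ n - logMode C κ s₂ n)) :
    φ = logProfile c κ s₁ - logProfile C κ s₂ := by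
  simp only [mul_sub] at h
  rw [(summable_intCast_mul_logMode hc hs₁).tsum_sub (summable_intCast_mul_logMode hC hs₂),
    mul_sub] at h
  simpa only [logProfile, logSeries, Complex.sub_re, Complex.ofReal_re] using congrArg Complex.re h

end LogProfile

section TravellingWaves

variable {F G : ℝ → ℝ}

lemma intervalIntegrable_sq_of_continuousOn_Ioi (hF : ContinuousOn F (Ioi 0)) {a b : ℝ}
    (ha : 0 < a) (hb : 0 < b) : IntervalIntegrable (fun s => F s ^ 2) volume a b :=
  ((hF.pow 2).mono fun _ hx => (lt_min ha hb).trans_le hx.1).intervalIntegrable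

lemma half_integral_travelling_sq_eq (hF : ContinuousOn F (Ioi 0)) (hG : ContinuousOn G (Ioi 0))
    {t lo hi : ℝ} (hlohi : lo ≤ hi) (hlo : 0 < t + lo) (hhi : 0 < t - hi) :
    1 / 2 * ∫ x in Ioo lo hi, ((F (t + x) + G (t - x)) ^ 2 + (F (t + x) - G (t - x)) ^ 2)
      = (∫ s in (t + lo)..(t + hi), F s ^ 2) + ∫ s in (t - hi)..(t - lo), G s ^ 2 := by
  have hmem (x : ℝ) (hx : x ∈ uIcc lo hi) : lo ≤ x ∧ x ≤ hi := by
    rwa [uIcc_of_le hlohi] at hx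
  have hFi : IntervalIntegrable (fun x => F (t + x) ^ 2) volume lo hi :=
    ((hF.pow 2).comp (continuous_const_add t).continuousOn fun x hx =>
      show 0 < t + x by linarith [(hmem x hx).1]).intervalIntegrable
  have hGi : IntervalIntegrable (fun x => G (t - x) ^ 2) volume lo hi :=
    ((hG.pow 2).comp (continuous_sub_left t).continuousOn fun x hx =>
      show 0 < t - x by linarith [(hmem x hx).2]).intervalIntegrable
  have hsq (x : ℝ) : (F (t + x) + G (t - x)) ^ 2 + (F (t + x) - G (t - x)) ^ 2
      = 2 * (F (t + x) ^ 2 + G (t - x) ^ 2) := by ring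
  simp only [hsq]
  rw [← integral_Ioc_eq_integral_Ioo, ← intervalIntegral.integral_of_le hlohi,
    intervalIntegral.integral_const_mul, intervalIntegral.integral_add hFi hGi,
    intervalIntegral.integral_comp_add_left (fun s => F s ^ 2),
    intervalIntegral.integral_comp_sub_left (fun s => G s ^ 2)]
  ring

lemma integral_sq_eq_mul_integral_sq_of_eq_mul_comp {p a b : ℝ} (hp : 0 < p) (ha : 0 < a)
    (hb : 0 < b) (h : ∀ u, 0 < u → G u = p * F (p * u)) :
    ∫ u in a..b, G u ^ 2 = p * ∫ v in (p * a)..(p * b), F v ^ 2 := by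
  have hpos (u : ℝ) (hu : u ∈ uIcc a b) : 0 < u := (lt_min ha hb).trans_le hu.1
  rw [intervalIntegral.integral_congr (g := fun u => p ^ 2 * F (p * u) ^ 2) fun u hu => by
      simp only [h u (hpos u hu)]; ring,
    intervalIntegral.integral_const_mul,
    intervalIntegral.integral_comp_mul_left (fun v => F v ^ 2) hp.ne', smul_eq_mul]
  field_simp

lemma mul_integral_add_mul_integral_le {f : ℝ → ℝ} {r q a b c : ℝ} (hf : ∀ x, 0 ≤ f x)
    (hrq : r ≤ q) (hab : a ≤ b)
    (hfab : IntervalIntegrable f volume a b) (hfbc : IntervalIntegrable f volume b c) :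
    r * (∫ x in a..b, f x) + q * (∫ x in b..c, f x) ≤ q * ∫ x in a..c, f x := by
  rw [← intervalIntegral.integral_add_adjacent_intervals hfab hfbc, mul_add]
  exact add_le_add_left
    (mul_le_mul_of_nonneg_right hrq (intervalIntegral.integral_nonneg hab fun x _ => hf x)) _

lemma setIntegral_Ioo_sq_const_mul_comp_mul {k p t₀ t₁ : ℝ} (hp : 0 < p) (h : t₀ ≤ t₁) :
    ∫ t in Ioo t₀ t₁, (k * F (p * t)) ^ 2 = k ^ 2 / p * ∫ s in (p * t₀)..(p * t₁), F s ^ 2 := by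
  simp only [mul_pow]
  rw [← integral_Ioc_eq_integral_Ioo, ← intervalIntegral.integral_of_le h,
    intervalIntegral.integral_const_mul,
    intervalIntegral.integral_comp_mul_left (fun s => F s ^ 2) hp.ne', smul_eq_mul]
  ring

end TravellingWaves

section Observability

variable {F G : ℝ → ℝ} {ℓ₁ ℓ₂ t₀ q r : ℝ}

lemma scaling_ratios (hℓ₁' : ℓ₁ < 1) (hℓ₂' : ℓ₂ < 1)
    (hq : q = (1 + ℓ₁) * (1 + ℓ₂) / ((1 - ℓ₁) * (1 - ℓ₂))) (hr : r = (1 + ℓ₂) / (1 - ℓ₂)) :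
    r * (1 - ℓ₂) = 1 + ℓ₂ ∧ q * (1 - ℓ₁) = r * (1 + ℓ₁) := by
  have h₁ : 1 - ℓ₁ ≠ 0 := by linarith
  have h₂ : 1 - ℓ₂ ≠ 0 := by linarith
  subst hq hr
  constructor <;> field_simp

lemma half_energy_le_mul_integral_period (hℓ₁ : 0 ≤ ℓ₁) (hℓ₁' : ℓ₁ < 1) (hℓ₂ : 0 ≤ ℓ₂)
    (hℓ₂' : ℓ₂ < 1) (ht₀ : 0 < t₀) (hq : q = (1 + ℓ₁) * (1 + ℓ₂) / ((1 - ℓ₁) * (1 - ℓ₂)))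
    (hr : r = (1 + ℓ₂) / (1 - ℓ₂)) (hFc : ContinuousOn F (Ioi 0)) (hGc : ContinuousOn G (Ioi 0))
    (hF : ∀ s, 0 < s → F s = q * F (q * s)) (hG : ∀ s, 0 < s → G s = r * F (r * s)) :
    1 / 2 * ∫ x in Ioo (-ℓ₁ * t₀) (ℓ₂ * t₀),
        ((F (t₀ + x) + G (t₀ - x)) ^ 2 + (F (t₀ + x) - G (t₀ - x)) ^ 2)
      ≤ q * ∫ s in ((1 + ℓ₂) * t₀)..(q * ((1 + ℓ₂) * t₀)), F s ^ 2 := by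
  obtain ⟨hrℓ₂, hqℓ₁⟩ := scaling_ratios hℓ₁' hℓ₂' hq hr
  have hr₀ : 0 < r := by rw [hr]; exact div_pos (by linarith) (by linarith)
  have hrq : r ≤ q := by nlinarith
  have hq₀ : 0 < q := hr₀.trans_le hrq
  have hb : (1 + ℓ₂) * t₀ ≤ r * (1 + ℓ₁) * t₀ := by
    refine mul_le_mul_of_nonneg_right ?_ ht₀.le
    nlinarith [mul_nonneg hr₀.le hℓ₁, mul_nonneg hr₀.le hℓ₂]
  have hm : r * (1 + ℓ₁) * t₀ ≤ q * ((1 + ℓ₂) * t₀) := by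
    rw [← mul_assoc, ← hqℓ₁]
    exact mul_le_mul_of_nonneg_right
      (mul_le_mul_of_nonneg_left (by linarith) hq₀.le) ht₀.le
  have hpos (a : ℝ) (ha : 0 < a) : 0 < a * t₀ := mul_pos ha ht₀
  rw [half_integral_travelling_sq_eq hFc hGc (by nlinarith) (by nlinarith) (by nlinarith),
    show t₀ + -ℓ₁ * t₀ = (1 - ℓ₁) * t₀ by ring, show t₀ + ℓ₂ * t₀ = (1 + ℓ₂) * t₀ by ring,
    show t₀ - ℓ₂ * t₀ = (1 - ℓ₂) * t₀ by ring, show t₀ - -ℓ₁ * t₀ = (1 + ℓ₁) * t₀ by ring,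
    integral_sq_eq_mul_integral_sq_of_eq_mul_comp hq₀ (hpos _ (by linarith))
      (hpos _ (by linarith)) hF,
    integral_sq_eq_mul_integral_sq_of_eq_mul_comp hr₀ (hpos _ (by linarith))
      (hpos _ (by linarith)) hG,
    ← mul_assoc q, hqℓ₁, ← mul_assoc r (1 - ℓ₂), hrℓ₂, ← mul_assoc r (1 + ℓ₁), add_comm]
  have hb₀ : 0 < (1 + ℓ₂) * t₀ := hpos _ (by linarith)
  exact mul_integral_add_mul_integral_le (fun _ => sq_nonneg _) hrq hb
    (intervalIntegrable_sq_of_continuousOn_Ioi hFc hb₀ (hb₀.trans_le hb))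
    (intervalIntegrable_sq_of_continuousOn_Ioi hFc (hb₀.trans_le hb) (hb₀.trans_le (hb.trans hm)))

theorem half_energy_le_boundary_integral {L T : ℝ} (hℓ₁ : 0 ≤ ℓ₁) (hℓ₁' : ℓ₁ < 1) (hℓ₂ : 0 ≤ ℓ₂)
    (hℓ₂' : ℓ₂ < 1) (ht₀ : 0 < t₀) (hq : q = (1 + ℓ₁) * (1 + ℓ₂) / ((1 - ℓ₁) * (1 - ℓ₂)))
    (hr : r = (1 + ℓ₂) / (1 - ℓ₂)) (hL : 0 ≤ L) (hL' : L < 1) (hT : (q - 1) * t₀ ≤ T)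
    (hFc : ContinuousOn F (Ioi 0)) (hGc : ContinuousOn G (Ioi 0))
    (hF : ∀ s, 0 < s → F s = q * F (q * s)) (hG : ∀ s, 0 < s → G s = r * F (r * s)) :
    1 / 2 * ∫ x in Ioo (-ℓ₁ * t₀) (ℓ₂ * t₀),
        ((F (t₀ + x) + G (t₀ - x)) ^ 2 + (F (t₀ + x) - G (t₀ - x)) ^ 2)
      ≤ q * (1 - ℓ₂ ^ 2) ^ 2 / (4 * (1 - L)) *
        ∫ t in Ioo t₀ (t₀ + T), (F (t + ℓ₂ * t) + G (t - ℓ₂ * t)) ^ 2 := by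
  obtain ⟨hrℓ₂, -⟩ := scaling_ratios hℓ₁' hℓ₂' hq hr
  have hq₁ : 1 ≤ q := by
    rw [hq, one_le_div (by nlinarith)]
    nlinarith
  have hT₀ : t₀ ≤ t₀ + T := by nlinarith
  have hb₀ : 0 < (1 + ℓ₂) * t₀ := by positivity
  have hboundary : ∫ t in Ioo t₀ (t₀ + T), (F (t + ℓ₂ * t) + G (t - ℓ₂ * t)) ^ 2
      = (1 + r) ^ 2 / (1 + ℓ₂) * ∫ s in ((1 + ℓ₂) * t₀)..((1 + ℓ₂) * (t₀ + T)), F s ^ 2 := by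
    rw [← setIntegral_Ioo_sq_const_mul_comp_mul (by linarith) hT₀]
    refine setIntegral_congr_fun measurableSet_Ioo fun t ht => ?_
    have ht' : 0 < t := ht₀.trans ht.1
    rw [hG _ (by nlinarith), show r * (t - ℓ₂ * t) = (1 + ℓ₂) * t by linear_combination t * hrℓ₂,
      show t + ℓ₂ * t = (1 + ℓ₂) * t by ring]
    ring
  have hconst : q ≤ q * (1 - ℓ₂ ^ 2) ^ 2 / (4 * (1 - L)) * ((1 + r) ^ 2 / (1 + ℓ₂)) := by
    have h₂ : 1 - ℓ₂ ≠ 0 := by linarith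
    have h₃ : 1 - L ≠ 0 := by linarith
    rw [show q * (1 - ℓ₂ ^ 2) ^ 2 / (4 * (1 - L)) * ((1 + r) ^ 2 / (1 + ℓ₂))
        = q * ((1 + ℓ₂) / (1 - L)) by rw [hr]; field_simp; ring]
    exact le_mul_of_one_le_right (by linarith) ((one_le_div (by linarith)).mpr (by linarith))
  calc _ ≤ q * ∫ s in ((1 + ℓ₂) * t₀)..(q * ((1 + ℓ₂) * t₀)), F s ^ 2 :=
        half_energy_le_mul_integral_period hℓ₁ hℓ₁' hℓ₂ hℓ₂' ht₀ hq hr hFc hGc hF hG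
    _ ≤ q * ∫ s in ((1 + ℓ₂) * t₀)..((1 + ℓ₂) * (t₀ + T)), F s ^ 2 := by
        refine mul_le_mul_of_nonneg_left (intervalIntegral.integral_mono_interval le_rfl
          (le_mul_of_one_le_left hb₀.le hq₁) (by nlinarith) (ae_of_all _ fun _ => sq_nonneg _)
          (intervalIntegrable_sq_of_continuousOn_Ioi hFc hb₀ (by nlinarith))) (by linarith)
    _ ≤ q * (1 - ℓ₂ ^ 2) ^ 2 / (4 * (1 - L)) * ((1 + r) ^ 2 / (1 + ℓ₂)) *
          ∫ s in ((1 + ℓ₂) * t₀)..((1 + ℓ₂) * (t₀ + T)), F s ^ 2 :=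
        mul_le_mul_of_nonneg_right hconst
          (intervalIntegral.integral_nonneg (by nlinarith) fun _ _ => sq_nonneg _)
    _ = _ := by rw [hboundary, mul_assoc]

end Observability

theorem observability_one_endpoint_general
    (ℓ₁ ℓ₂ L₀ t₀ α β κ : ℝ)
    (hℓ₁ : 0 ≤ ℓ₁) (hℓ₁' : ℓ₁ < 1) (hℓ₂ : 0 ≤ ℓ₂) (hℓ₂' : ℓ₂ < 1)
    (hℓ : 0 < ℓ₁ + ℓ₂) (hL₀ : 0 < L₀) (ht₀ : t₀ = L₀ / (ℓ₁ + ℓ₂))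
    (hα : α = (1 + ℓ₁) / (1 - ℓ₂)) (hβ : β = (1 + ℓ₂) / (1 - ℓ₁))
    (hκ : κ = 2 / Real.log (α * β))
    (L : ℝ) (hL : L = max ℓ₁ ℓ₂)
    (c : ℤ → ℂ)
    (hcsum : Summable fun n : ℤ => ‖(n : ℂ) * c n‖)
    (C : ℤ → ℂ)
    (hC : ∀ n : ℤ, C n = c n *
      Complex.exp (Complex.I * n * Real.pi * κ * Real.log ((1 + ℓ₂) / (1 - ℓ₂))))
    (Φx : ℝ → ℝ → ℝ)
    (hΦx : ∀ t : ℝ, t₀ ≤ t → ∀ x : ℝ, -ℓ₁ * t ≤ x → x ≤ ℓ₂ * t →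
      (Φx x t : ℂ) = Complex.I * Real.pi * κ * ∑' n : ℤ, (n : ℂ) *
        (c n * Complex.exp (Complex.I * n * Real.pi * κ * Real.log (t + x)) /
            ((t + x : ℝ) : ℂ) +
         C n * Complex.exp (Complex.I * n * Real.pi * κ * Real.log (t - x)) /
            ((t - x : ℝ) : ℂ)))
    (Φt : ℝ → ℝ → ℝ)
    (hΦt : ∀ t : ℝ, t₀ ≤ t → ∀ x : ℝ, -ℓ₁ * t ≤ x → x ≤ ℓ₂ * t →
      (Φt x t : ℂ) = Complex.I * Real.pi * κ * ∑' n : ℤ, (n : ℂ) *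
        (c n * Complex.exp (Complex.I * n * Real.pi * κ * Real.log (t + x)) /
            ((t + x : ℝ) : ℂ) -
         C n * Complex.exp (Complex.I * n * Real.pi * κ * Real.log (t - x)) /
            ((t - x : ℝ) : ℂ)))
    (E : ℝ → ℝ)
    (hE : ∀ t : ℝ, E t = (1 / 2) * ∫ x in Set.Ioo (-ℓ₁ * t) (ℓ₂ * t),
      ((Φx x t) ^ 2 + (Φt x t) ^ 2))
    :
    ∀ T : ℝ, (α * β - 1) * t₀ ≤ T →
      E t₀ ≤ α * β * (1 - ℓ₂ ^ 2) ^ 2 / (4 * (1 - L)) *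
        ∫ t in Set.Ioo t₀ (t₀ + T), (Φx (ℓ₂ * t) t) ^ 2 := by
  intro T hT
  have ht₀pos : 0 < t₀ := ht₀ ▸ div_pos hL₀ hℓ
  have hαβ : α * β = (1 + ℓ₁) * (1 + ℓ₂) / ((1 - ℓ₁) * (1 - ℓ₂)) := by
    rw [hα, hβ, div_mul_div_comm, mul_comm (1 - ℓ₂)]
  have hκαβ : κ * Real.log (α * β) = 2 := by
    have : 0 < Real.log (α * β) :=
      Real.log_pos (by rw [hαβ, one_lt_div (by nlinarith)]; nlinarith)
    rw [hκ]
    field_simp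
  have hCsum := summable_norm_of_phase hcsum hC
  have hwave (t : ℝ) (ht : t₀ ≤ t) (x : ℝ) (hx₁ : -ℓ₁ * t ≤ x) (hx₂ : x ≤ ℓ₂ * t) :
      Φx x t = logProfile c κ (t + x) + logProfile C κ (t - x) ∧
      Φt x t = logProfile c κ (t + x) - logProfile C κ (t - x) := by
    have h₁ : 0 < t + x := by nlinarith
    have h₂ : 0 < t - x := by nlinarith
    exact ⟨eq_logProfile_add_of_ofReal_eq hcsum hCsum h₁ h₂ (hΦx t ht x hx₁ hx₂),
      eq_logProfile_sub_of_ofReal_eq hcsum hCsum h₁ h₂ (hΦt t ht x hx₁ hx₂)⟩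
  convert half_energy_le_boundary_integral hℓ₁ hℓ₁' hℓ₂ hℓ₂' ht₀pos hαβ rfl
    (hL ▸ le_max_of_le_left hℓ₁) (hL ▸ max_lt hℓ₁' hℓ₂') hT
    (continuousOn_logProfile hcsum) (continuousOn_logProfile hCsum)
    (fun s hs => logProfile_eq_mul_logProfile_mul hcsum (by rw [hαβ]; positivity) hs hκαβ)
    (fun s hs => logProfile_of_phase hcsum (by positivity) hs hC) using 2
  · rw [hE]
    refine congrArg _ (setIntegral_congr_fun measurableSet_Ioo fun x hx => ?_)
    obtain ⟨hΦx₀, hΦt₀⟩ := hwave t₀ le_rfl x hx.1.le hx.2.le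
    rw [hΦx₀, hΦt₀]
  · refine setIntegral_congr_fun measurableSet_Ioo fun t ht => ?_
    rw [(hwave t ht.1.le (ℓ₂ * t) (by nlinarith [ht₀pos.trans ht.1]) le_rfl).1]

/-- observability at one endpoint in the sharp time
`T_ℓ = (αβ−1)t₀ = 2L₀/((1−ℓ₁)(1−ℓ₂))`. -/
theorem observability_one_endpoint
    (ℓ₁ ℓ₂ L₀ t₀ α β κ : ℝ)
    (hℓ₁ : 0 ≤ ℓ₁) (hℓ₁' : ℓ₁ < 1) (hℓ₂ : 0 ≤ ℓ₂) (hℓ₂' : ℓ₂ < 1)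
    (hℓ : 0 < ℓ₁ + ℓ₂) (hL₀ : 0 < L₀) (ht₀ : t₀ = L₀ / (ℓ₁ + ℓ₂))
    (hα : α = (1 + ℓ₁) / (1 - ℓ₂)) (hβ : β = (1 + ℓ₂) / (1 - ℓ₁))
    (hκ : κ = 2 / Real.log (α * β))
    (L : ℝ) (hL : L = max ℓ₁ ℓ₂)
    (c : ℤ → ℂ) (hc0 : c 0 = 0)
    (hcsum : Summable fun n : ℤ => ‖(n : ℂ) * c n‖)
    (hconj : ∀ n : ℤ, c (-n) = (starRingEnd ℂ) (c n))
    (C : ℤ → ℂ)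
    (hC : ∀ n : ℤ, C n = c n *
      Complex.exp (Complex.I * n * Real.pi * κ * Real.log ((1 + ℓ₂) / (1 - ℓ₂))))
    (Φx : ℝ → ℝ → ℝ)
    (hΦx : ∀ t : ℝ, t₀ ≤ t → ∀ x : ℝ, -ℓ₁ * t ≤ x → x ≤ ℓ₂ * t →
      (Φx x t : ℂ) = Complex.I * Real.pi * κ * ∑' n : ℤ, (n : ℂ) *
        (c n * Complex.exp (Complex.I * n * Real.pi * κ * Real.log (t + x)) /
            ((t + x : ℝ) : ℂ) +
         C n * Complex.exp (Complex.I * n * Real.pi * κ * Real.log (t - x)) /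
            ((t - x : ℝ) : ℂ)))
    (Φt : ℝ → ℝ → ℝ)
    (hΦt : ∀ t : ℝ, t₀ ≤ t → ∀ x : ℝ, -ℓ₁ * t ≤ x → x ≤ ℓ₂ * t →
      (Φt x t : ℂ) = Complex.I * Real.pi * κ * ∑' n : ℤ, (n : ℂ) *
        (c n * Complex.exp (Complex.I * n * Real.pi * κ * Real.log (t + x)) /
            ((t + x : ℝ) : ℂ) -
         C n * Complex.exp (Complex.I * n * Real.pi * κ * Real.log (t - x)) /
            ((t - x : ℝ) : ℂ)))
    (E : ℝ → ℝ)
    (hE : ∀ t : ℝ, E t = (1 / 2) * ∫ x in Set.Ioo (-ℓ₁ * t) (ℓ₂ * t),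
      ((Φx x t) ^ 2 + (Φt x t) ^ 2))
    :
    ∀ T : ℝ, (α * β - 1) * t₀ ≤ T →
      E t₀ ≤ α * β * (1 - ℓ₂ ^ 2) ^ 2 / (4 * (1 - L)) *
        ∫ t in Set.Ioo t₀ (t₀ + T), (Φx (ℓ₂ * t) t) ^ 2 :=
  observability_one_endpoint_general ℓ₁ ℓ₂ L₀ t₀ α β κ hℓ₁ hℓ₁' hℓ₂ hℓ₂' hℓ hL₀ ht₀ hα hβ hκ L hL c
    hcsum C hC Φx hΦx Φt hΦt E hE
end
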